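/- arXiv:2005.08329 — 5 statements merged into one kernel-verified Lean document; each statement's English description precedes it below -/
import Mathlib

section
/- If an element x of the rational vector space spanned by Young diagrams satisfies ξ(x) = 0 and ∇(x) = 0, where ξ is the linear operator sending a Young diagram λ to the sum of all Young diagrams obtained from λ by deleting a single box, and ∇ sends λ to the sum of diagrams λ - (i,j) weighted by the content j - i of the deleted box, then x is a rational multiple of the empty diagram. -/
/-- `Covers μ lam` : `μ` is obtained from `lam` by deleting a single box. -/
def Covers (mu lam : YoungDiagram) : Prop :=
  mu.cells ⊆ lam.cells ∧ lam.cells.card = mu.cells.card + 1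

/-- The sum of the contents `j - i` of the boxes of `lam` that are not in `mu`. -/
def remContent (mu lam : YoungDiagram) : ℤ :=
  ∑ c ∈ lam.cells \ mu.cells, ((c.2 : ℤ) - (c.1 : ℤ))

instance (mu lam : YoungDiagram) : Decidable (Covers mu lam) := by
  unfold Covers; infer_instance

instance : DecidableEq YoungDiagram :=
  fun a b => decidable_of_iff (a.cells = b.cells) (YoungDiagram.ext_iff).symm

namespace KeyLemmaAux

open Finset

lemma geom_bound (n : ℕ) : ∀ (m : ℕ) (g : ℕ → ℕ), (∀ k, g k ≤ n) →
    (∑ k ∈ Finset.range m, g k * (n + 1) ^ k) < (n + 1) ^ m := by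
  intro m
  induction m with
  | zero => intro g hg; simp
  | succ m ih =>
    intro g hg
    rw [Finset.sum_range_succ]
    have h1 := ih g hg
    have h2 : g m * (n + 1) ^ m ≤ n * (n + 1) ^ m :=
      Nat.mul_le_mul_right _ (hg m)
    have h3 : (n + 1) ^ (m + 1) = (n + 1) ^ m + n * (n + 1) ^ m := by ring
    omega

/-- A weight function implementing (size-graded) lexicographic comparison of
row lengths. -/
def f (n : ℕ) (ν : YoungDiagram) : ℕ :=
  ∑ k ∈ Finset.range n, ν.rowLen (n - 1 - k) * (n + 1) ^ k

lemma rowLen_le_card (ν : YoungDiagram) (i : ℕ) : ν.rowLen i ≤ ν.cells.card := by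
  rw [YoungDiagram.rowLen_eq_card]
  apply Finset.card_le_card
  intro c hc
  rw [YoungDiagram.mem_row_iff] at hc
  exact (YoungDiagram.mem_cells c).2 hc.1

lemma colLen_le_card (ν : YoungDiagram) (j : ℕ) : ν.colLen j ≤ ν.cells.card := by
  rw [YoungDiagram.colLen_eq_card]
  apply Finset.card_le_card
  intro c hc
  rw [YoungDiagram.mem_col_iff] at hc
  exact (YoungDiagram.mem_cells c).2 hc.1

lemma rowLen_congr {a b : YoungDiagram} {i : ℕ}
    (h : ∀ j, (i, j) ∈ a ↔ (i, j) ∈ b) : a.rowLen i = b.rowLen i := by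
  have key : ∀ u v : YoungDiagram, (∀ j, (i, j) ∈ u → (i, j) ∈ v) →
      u.rowLen i ≤ v.rowLen i := by
    intro u v huv
    by_contra hlt
    push_neg at hlt
    have hm : (i, v.rowLen i) ∈ u := YoungDiagram.mem_iff_lt_rowLen.2 hlt
    exact absurd (YoungDiagram.mem_iff_lt_rowLen.1 (huv _ hm)) (lt_irrefl _)
  exact le_antisymm (key a b fun j hj => (h j).1 hj) (key b a fun j hj => (h j).2 hj)

lemma f_lt {n : ℕ} {a b : YoungDiagram} (ha : a.cells.card = n) (hb : b.cells.card = n)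
    {i : ℕ} (hi : i < n) (hrows : ∀ j, j < i → a.rowLen j = b.rowLen j)
    (hlt : a.rowLen i < b.rowLen i) : f n a < f n b := by
  set K := n - 1 - i with hK
  have hKi : n - 1 - K = i := by omega
  have hKn : K + 1 ≤ n := by omega
  -- split both sums
  have split : ∀ ν : YoungDiagram, f n ν =
      ((∑ k ∈ Finset.range K, ν.rowLen (n - 1 - k) * (n + 1) ^ k)
        + ν.rowLen i * (n + 1) ^ K)
      + ∑ k ∈ Finset.Ico (K + 1) n, ν.rowLen (n - 1 - k) * (n + 1) ^ k := by
    intro ν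
    rw [f, Finset.range_eq_Ico, ← Finset.sum_Ico_consecutive _ (Nat.zero_le (K + 1)) hKn,
      ← Finset.range_eq_Ico, Finset.sum_range_succ, hKi]
  rw [split a, split b]
  have htail : ∀ k ∈ Finset.Ico (K + 1) n,
      a.rowLen (n - 1 - k) * (n + 1) ^ k = b.rowLen (n - 1 - k) * (n + 1) ^ k := by
    intro k hk
    rw [Finset.mem_Ico] at hk
    rw [hrows (n - 1 - k) (by omega)]
  rw [Finset.sum_congr rfl htail]
  have hheadlt : (∑ k ∈ Finset.range K, a.rowLen (n - 1 - k) * (n + 1) ^ k)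
      < (n + 1) ^ K := by
    apply geom_bound
    intro k
    exact le_trans (rowLen_le_card a _) (le_of_eq ha)
  have hmul : a.rowLen i * (n + 1) ^ K + (n + 1) ^ K ≤ b.rowLen i * (n + 1) ^ K :=
    calc a.rowLen i * (n + 1) ^ K + (n + 1) ^ K = (a.rowLen i + 1) * (n + 1) ^ K := by ring
      _ ≤ b.rowLen i * (n + 1) ^ K := Nat.mul_le_mul_right _ hlt
  have hge : (0:ℕ) ≤ ∑ k ∈ Finset.range K, b.rowLen (n - 1 - k) * (n + 1) ^ k :=
    Nat.zero_le _
  omega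

end KeyLemmaAux

open KeyLemmaAux in
/-- **Key Lemma.** If `x` in the rational span of Young diagrams is killed by both `ξ`
(single box removal) and `∇` (content-weighted single box removal), then `x` is a
rational multiple of the empty diagram. -/
theorem key_lemma
    (xi nabla : (YoungDiagram →₀ ℚ) →ₗ[ℚ] (YoungDiagram →₀ ℚ))
    (hxi : ∀ lam mu : YoungDiagram,
      xi (Finsupp.single lam 1) mu = if Covers mu lam then 1 else 0)
    (hnabla : ∀ lam mu : YoungDiagram,
      nabla (Finsupp.single lam 1) mu =
        if Covers mu lam then (remContent mu lam : ℚ) else 0)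
    (x : YoungDiagram →₀ ℚ) (h1 : xi x = 0) (h2 : nabla x = 0) :
    ∃ a : ℚ, x = Finsupp.single (⊥ : YoungDiagram) a := by
  classical
  -- expansion of an operator applied to x, evaluated at a diagram
  have expand : ∀ (op : (YoungDiagram →₀ ℚ) →ₗ[ℚ] (YoungDiagram →₀ ℚ))
      (g : YoungDiagram → YoungDiagram → ℚ),
      (∀ l m, op (Finsupp.single l 1) m = g l m) →
      ∀ m : YoungDiagram, (op x) m = ∑ ν ∈ x.support, x ν * g ν m := by
    intro op g hg m
    conv_lhs => rw [← Finsupp.sum_single x]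
    rw [Finsupp.sum, map_sum, Finsupp.finset_sum_apply]
    apply Finset.sum_congr rfl
    intro ν _
    have hsingle : Finsupp.single ν (x ν) = x ν • Finsupp.single ν (1 : ℚ) := by
      rw [Finsupp.smul_single, smul_eq_mul, mul_one]
    rw [hsingle, map_smul, Finsupp.smul_apply, hg, smul_eq_mul]
  have shrink : ∀ (g : YoungDiagram → ℚ) (P : Finset YoungDiagram),
      (∀ ν ∈ x.support, ν ∉ P → x ν * g ν = 0) →
      ∑ ν ∈ x.support, x ν * g ν = ∑ ν ∈ P, x ν * g ν := by
    intro g P hP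
    have e1 : ∑ ν ∈ x.support ∩ P, x ν * g ν = ∑ ν ∈ x.support, x ν * g ν := by
      apply Finset.sum_subset (Finset.inter_subset_left)
      intro ν hν hν'
      exact hP ν hν (fun h => hν' (Finset.mem_inter.2 ⟨hν, h⟩))
    have e2 : ∑ ν ∈ x.support ∩ P, x ν * g ν = ∑ ν ∈ P, x ν * g ν := by
      apply Finset.sum_subset (Finset.inter_subset_right)
      intro ν hν hν'
      have : ν ∉ x.support := fun h => hν' (Finset.mem_inter.2 ⟨h, hν⟩)
      rw [Finsupp.notMem_support_iff] at this
      rw [this, zero_mul]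
    rw [← e1, e2]
  have key : ∀ ν₀ ∈ x.support, ν₀ = (⊥ : YoungDiagram) := by
    intro ν₀ hν₀supp
    by_contra hν₀ne
    set n := ν₀.cells.card with hn
    have hn1 : 1 ≤ n := by
      rcases Finset.eq_empty_or_nonempty ν₀.cells with h | h
      · exact absurd (YoungDiagram.ext (by rw [h, YoungDiagram.cells_bot])) hν₀ne
      · exact Finset.card_pos.2 h
    set T := x.support.filter (fun ν => ν.cells.card = n) with hT
    have hν₀T : ν₀ ∈ T := Finset.mem_filter.2 ⟨hν₀supp, rfl⟩
    obtain ⟨lam, hlamT, hmax⟩ := T.exists_max_image (f n) ⟨ν₀, hν₀T⟩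
    have hlam_supp : lam ∈ x.support := (Finset.mem_filter.1 hlamT).1
    have hlam_card : lam.cells.card = n := (Finset.mem_filter.1 hlamT).2
    set L := lam.colLen 0 with hL
    have hL1 : 1 ≤ L := by
      have : (0, 0) ∈ lam := by
        obtain ⟨c, hc⟩ := Finset.card_pos.1 (by omega : 0 < lam.cells.card)
        exact lam.up_left_mem (Nat.zero_le _) (Nat.zero_le _) ((YoungDiagram.mem_cells c).1 hc)
      rw [YoungDiagram.mem_iff_lt_colLen] at this
      omega
    have hLn : L ≤ n := hlam_card ▸ colLen_le_card lam 0
    set r := lam.rowLen (L - 1) with hr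
    have hr1 : 1 ≤ r := by
      have : (L - 1, 0) ∈ lam := YoungDiagram.mem_iff_lt_colLen.2 (by omega)
      rw [YoungDiagram.mem_iff_lt_rowLen] at this
      omega
    -- the (L - 1, r - 1) cell
    have hcorner_mem : ((L - 1, r - 1) : ℕ × ℕ) ∈ lam :=
      YoungDiagram.mem_iff_lt_rowLen.2 (by omega)
    have hrowbound : ∀ p : ℕ × ℕ, p ∈ lam → p.1 ≤ L - 1 := by
      intro p hp
      have : (p.1, 0) ∈ lam := lam.up_left_mem le_rfl (Nat.zero_le _) hp
      rw [YoungDiagram.mem_iff_lt_colLen] at this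
      omega
    -- the diagram mu : lam minus the (L - 1, r - 1)
    have hmu_lower : IsLowerSet (↑(lam.cells.erase (L - 1, r - 1)) : Set (ℕ × ℕ)) := by
      intro a b hba ha
      simp only [Finset.coe_erase, Set.mem_diff, Set.mem_singleton_iff, Finset.mem_coe,
        YoungDiagram.mem_cells] at *
      refine ⟨lam.isLowerSet hba ha.1, ?_⟩
      intro hbc
      subst hbc
      have h1 : L - 1 ≤ a.1 := hba.1
      have h2 : a.1 ≤ L - 1 := hrowbound a ha.1
      have h3 : r - 1 ≤ a.2 := hba.2
      have h4 : a.2 < r := by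
        have := YoungDiagram.mem_iff_lt_rowLen.1 (show (a.1, a.2) ∈ lam from ha.1)
        have ha1 : a.1 = L - 1 := le_antisymm h2 h1
        rw [ha1] at this
        omega
      exact ha.2 (Prod.ext (le_antisymm h2 h1) (by omega))
    set mu : YoungDiagram := ⟨lam.cells.erase (L - 1, r - 1), hmu_lower⟩ with hmu
    have hmu_cells : mu.cells = lam.cells.erase ((L - 1, r - 1) : ℕ × ℕ) := rfl
    have hmu_mem : ∀ p : ℕ × ℕ, p ∈ mu ↔ p ∈ lam ∧ p ≠ (L - 1, r - 1) := by
      intro p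
      constructor
      · intro hp
        have h' : p ∈ lam.cells.erase ((L - 1, r - 1) : ℕ × ℕ) := hp
        rw [Finset.mem_erase] at h'
        exact ⟨h'.2, h'.1⟩
      · intro ⟨h1, h2⟩
        show p ∈ lam.cells.erase ((L - 1, r - 1) : ℕ × ℕ)
        exact Finset.mem_erase.2 ⟨h2, h1⟩
    have hmu_card : lam.cells.card = mu.cells.card + 1 := by
      show lam.cells.card = (lam.cells.erase (L - 1, r - 1)).card + 1
      rw [Finset.card_erase_of_mem ((YoungDiagram.mem_cells (L - 1, r - 1)).1 hcorner_mem)]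
      omega
    have hCov_lam : Covers mu lam := ⟨Finset.erase_subset _ _, hmu_card⟩
    have hsdiff_lam : lam.cells \ mu.cells = {(L - 1, r - 1)} := by
      ext p
      simp only [Finset.mem_sdiff, Finset.mem_singleton]
      constructor
      · intro ⟨hp, hp'⟩
        by_contra hne
        exact hp' (Finset.mem_erase.2 ⟨hne, hp⟩)
      · intro h
        subst h
        exact ⟨hcorner_mem, Finset.notMem_erase _ _⟩
    have hrem_lam : remContent mu lam = (r : ℤ) - L := by
      rw [remContent, hsdiff_lam, Finset.sum_singleton]
      have : ((r - 1 : ℕ) : ℤ) = (r : ℤ) - 1 := by omega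
      have h2 : ((L - 1 : ℕ) : ℤ) = (L : ℤ) - 1 := by omega
      show ((r - 1 : ℕ) : ℤ) - ((L - 1 : ℕ) : ℤ) = (r : ℤ) - L
      omega
    -- classification of covers of mu
    have hclass : ∀ ν : YoungDiagram, Covers mu ν →
        ν = lam ∨ (2 ≤ r ∧ ν.cells = insert (L, 0) mu.cells)
          ∨ (ν.cells.card = n ∧ f n lam < f n ν) := by
      intro ν ⟨hsub, hcard⟩
      have hνcard : ν.cells.card = n := by omega
      have hd : (ν.cells \ mu.cells).card = 1 := by
        rw [Finset.card_sdiff_of_subset hsub]; omega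
      obtain ⟨c, hc⟩ := Finset.card_eq_one.1 hd
      have hc_mem : c ∈ ν.cells \ mu.cells := hc ▸ Finset.mem_singleton_self c
      have hcν : c ∈ ν := (YoungDiagram.mem_cells c).2 (Finset.mem_sdiff.1 hc_mem).1
      have hcμ : c ∉ mu := fun h => (Finset.mem_sdiff.1 hc_mem).2 ((YoungDiagram.mem_cells c).1 h)
      have hν_eq : ν.cells = insert c mu.cells := by
        ext p
        simp only [Finset.mem_insert]
        constructor
        · intro hp
          by_cases hpm : p ∈ mu.cells
          · exact Or.inr hpm
          · left
            have : p ∈ ν.cells \ mu.cells := Finset.mem_sdiff.2 ⟨hp, hpm⟩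
            rw [hc] at this
            exact Finset.mem_singleton.1 this
        · intro h
          rcases h with he | hp
          · rw [he]; exact (YoungDiagram.mem_cells c).1 hcν
          · exact hsub hp
      have hν_mem : ∀ p : ℕ × ℕ, p ∈ ν ↔ p = c ∨ p ∈ mu := by
        intro p
        rw [← YoungDiagram.mem_cells, hν_eq, Finset.mem_insert, YoungDiagram.mem_cells]
      rcases lt_trichotomy c.1 (L - 1) with hc1 | hc1 | hc1
      · -- c in an earlier row : ν is lex-bigger
        right; right
        refine ⟨hνcard, ?_⟩
        have hclam : c ∉ lam := by
          intro h
          exact hcμ ((hmu_mem c).2 ⟨h, fun he => by rw [he] at hc1; omega⟩)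
        apply f_lt hlam_card hνcard (i := c.1) (by omega)
        · intro j hj
          apply rowLen_congr
          intro t
          rw [hν_mem (j, t)]
          constructor
          · intro h
            right
            refine (hmu_mem _).2 ⟨h, ?_⟩
            intro he
            have hje : j = L - 1 := congrArg Prod.fst he
            omega
          · intro h
            rcases h with h | h
            · exfalso
              have hj1 : j = c.1 := congrArg Prod.fst h
              omega
            · exact ((hmu_mem _).1 h).1
        · have hle : lam.rowLen c.1 ≤ c.2 := by
            by_contra hlt
            push_neg at hlt
            exact hclam (YoungDiagram.mem_iff_lt_rowLen.2 (show c.2 < lam.rowLen c.1 from hlt))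
          have : c.2 < ν.rowLen c.1 :=
            YoungDiagram.mem_iff_lt_rowLen.1 (show ((c.1, c.2) : ℕ × ℕ) ∈ ν from hcν)
          omega
      · -- c in row L-1 : must be the (L - 1, r - 1), ν = lam
        left
        have hceq : c = (L - 1, r - 1) := by
          by_contra hne
          have hclam : c ∉ lam := by
            intro h
            exact hcμ ((hmu_mem c).2 ⟨h, hne⟩)
          have hc2 : r ≤ c.2 := by
            by_contra hlt
            push_neg at hlt
            apply hclam
            apply YoungDiagram.mem_iff_lt_rowLen.2
            rw [hc1, ← hr]
            exact hlt
          have hcornerν : ((L - 1, r - 1) : ℕ × ℕ) ∈ ν := by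
            apply ν.isLowerSet _ hcν
            exact Prod.le_def.2 ⟨show L - 1 ≤ c.1 by omega, show r - 1 ≤ c.2 by omega⟩
          rcases (hν_mem (L - 1, r - 1)).1 hcornerν with h | h
          · exact hne h.symm
          · exact ((hmu_mem (L - 1, r - 1)).1 h).2 rfl
        apply YoungDiagram.ext
        rw [hν_eq, hceq]
        show insert (L - 1, r - 1) (lam.cells.erase (L - 1, r - 1)) = lam.cells
        exact Finset.insert_erase ((YoungDiagram.mem_cells (L - 1, r - 1)).1 hcorner_mem)
      · -- c below row L-1 : c = (L, 0) and r ≥ 2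
        right; left
        have hmu_row : ∀ p : ℕ × ℕ, p ∈ mu → p.1 ≤ L - 1 := fun p hp =>
          hrowbound p ((hmu_mem p).1 hp).1
        have hc2 : c.2 = 0 := by
          by_contra hne
          have : (c.1, 0) ∈ ν := ν.up_left_mem le_rfl (Nat.zero_le _) hcν
          rcases (hν_mem (c.1, 0)).1 this with h | h
          · exact hne (congrArg Prod.snd h).symm
          · have := hmu_row _ h
            simp at this
            omega
        have hcL : c.1 = L := by
          by_contra hne
          have hgt : L < c.1 := by omega
          have : ((L, 0) : ℕ × ℕ) ∈ ν := by
            apply ν.isLowerSet _ hcν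
            exact Prod.le_def.2 ⟨show L ≤ c.1 by omega, show 0 ≤ c.2 by omega⟩
          rcases (hν_mem (L, 0)).1 this with h | h
          · rw [← h] at hgt; simp at hgt
          · have := hmu_row _ h
            simp at this
            omega
        have hr2 : 2 ≤ r := by
          by_contra hlt
          have hrr : r = 1 := by omega
          have : ((L - 1, 0) : ℕ × ℕ) ∈ ν := by
            apply ν.isLowerSet _ hcν
            exact Prod.le_def.2 ⟨show L - 1 ≤ c.1 by omega, show 0 ≤ c.2 by omega⟩
          rcases (hν_mem (L - 1, 0)).1 this with h | h
          · have : L - 1 = c.1 := congrArg Prod.fst h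
            omega
          · have := ((hmu_mem _).1 h).2
            exact this (by rw [hrr])
        refine ⟨hr2, ?_⟩
        rw [hν_eq]
        congr 1
        exact Prod.ext hcL hc2
    -- the two linear equations at mu
    have E1 : ∑ ν ∈ x.support, x ν * (if Covers mu ν then (1 : ℚ) else 0) = 0 := by
      rw [← expand xi _ (fun l m => hxi l m) mu, h1]
      rfl
    have E2 : ∑ ν ∈ x.support,
        x ν * (if Covers mu ν then ((remContent mu ν : ℤ) : ℚ) else 0) = 0 := by
      rw [← expand nabla _ (fun l m => hnabla l m) mu, h2]
      rfl
    have hxlam_ne : x lam ≠ 0 := Finsupp.mem_support_iff.1 hlam_supp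
    -- exclusion of lex-bigger covers
    have hnotbig : ∀ ν ∈ x.support, ¬(ν.cells.card = n ∧ f n lam < f n ν) := by
      intro ν hν ⟨hcard, hlt⟩
      have : ν ∈ T := Finset.mem_filter.2 ⟨hν, hcard⟩
      exact absurd (hmax ν this) (by omega)
    by_cases hr2 : 2 ≤ r
    · -- define nu' = mu + (L,0)
      have hL0_not_lam : ((L, 0) : ℕ × ℕ) ∉ lam := by
        intro h
        have := YoungDiagram.mem_iff_lt_colLen.1 h
        omega
      have hnu'_lower : IsLowerSet (↑(insert ((L, 0) : ℕ × ℕ) mu.cells) : Set (ℕ × ℕ)) := by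
        intro a b hba ha
        simp only [Finset.coe_insert, Set.mem_insert_iff, Finset.mem_coe] at *
        rcases ha with rfl | ha
        · have hb2 : b.2 = 0 := by
            have := hba.2; omega
          by_cases hb1 : b.1 = L
          · left; exact Prod.ext hb1 hb2
          · right
            have hblt : b.1 < L := by have := hba.1; omega
            have hbl : (b.1, 0) ∈ lam := YoungDiagram.mem_iff_lt_colLen.2 hblt
            have : b = (b.1, 0) := Prod.ext rfl hb2
            rw [this]
            refine (hmu_mem _).2 ⟨hbl, ?_⟩
            intro he
            have := congrArg Prod.snd he
            simp only at this
            omega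
        · right
          exact mu.isLowerSet hba ha
          
      set nu' : YoungDiagram := ⟨insert ((L, 0) : ℕ × ℕ) mu.cells, hnu'_lower⟩ with hnu'
      have hL0_not_mu : ((L, 0) : ℕ × ℕ) ∉ mu.cells := by
        intro h
        exact hL0_not_lam ((hmu_mem _).1 ((YoungDiagram.mem_cells _).2 h)).1
      have hCov_nu' : Covers mu nu' := by
        constructor
        · exact Finset.subset_insert _ _
        · show (insert ((L, 0) : ℕ × ℕ) mu.cells).card = mu.cells.card + 1
          rw [Finset.card_insert_of_notMem hL0_not_mu]
      have hsdiff_nu' : nu'.cells \ mu.cells = {((L, 0) : ℕ × ℕ)} := by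
        show insert ((L, 0) : ℕ × ℕ) mu.cells \ mu.cells = _
        rw [Finset.insert_sdiff_of_notMem _ hL0_not_mu, Finset.sdiff_self]
        rfl
      have hrem_nu' : remContent mu nu' = -(L : ℤ) := by
        rw [remContent, hsdiff_nu', Finset.sum_singleton]
        simp
      have hne_lam_nu' : lam ≠ nu' := by
        intro h
        apply hL0_not_lam
        rw [h]
        exact (YoungDiagram.mem_cells _).2 (Finset.mem_insert_self _ _)
      have hP : ∀ g : YoungDiagram → ℚ, (∀ ν ∈ x.support, ν ∉ ({lam, nu'} : Finset YoungDiagram)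
          → x ν * g ν = 0) → True := fun _ _ => trivial
      have hvanish : ∀ (g : YoungDiagram → ℚ), (∀ ν, ¬ Covers mu ν → g ν = 0) →
          ∀ ν ∈ x.support, ν ∉ ({lam, nu'} : Finset YoungDiagram) → x ν * g ν = 0 := by
        intro g hg ν hν hνP
        by_cases hcov : Covers mu ν
        · rcases hclass ν hcov with h | ⟨_, h⟩ | h
          · exact absurd h (by intro he; exact hνP (by rw [he]; exact Finset.mem_insert_self _ _))
          · have : ν = nu' := YoungDiagram.ext h
            exact absurd this (by intro he; exact hνP (by
              rw [he]; exact Finset.mem_insert_of_mem (Finset.mem_singleton_self _)))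
          · exact absurd h (hnotbig ν hν)
        · rw [hg ν hcov, mul_zero]
      have hE1' : x lam * 1 + x nu' * 1 = 0 := by
        have hs : ∑ ν ∈ ({lam, nu'} : Finset YoungDiagram),
            x ν * (if Covers mu ν then (1 : ℚ) else 0) = 0 :=
          ((shrink (fun ν => if Covers mu ν then (1 : ℚ) else 0) {lam, nu'}
            (hvanish _ (fun ν h => if_neg h))).symm.trans E1)
        rw [Finset.sum_pair hne_lam_nu', if_pos hCov_lam, if_pos hCov_nu'] at hs
        exact hs
      have hE2' : x lam * ((r : ℚ) - L) + x nu' * (-(L : ℚ)) = 0 := by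
        have hs : ∑ ν ∈ ({lam, nu'} : Finset YoungDiagram),
            x ν * (if Covers mu ν then ((remContent mu ν : ℤ) : ℚ) else 0) = 0 :=
          ((shrink (fun ν => if Covers mu ν then ((remContent mu ν : ℤ) : ℚ) else 0)
            {lam, nu'} (hvanish _ (fun ν h => if_neg h))).symm.trans E2)
        rw [Finset.sum_pair hne_lam_nu', if_pos hCov_lam, if_pos hCov_nu',
          hrem_lam, hrem_nu'] at hs
        push_cast at hs
        convert hs using 2
      have hfin : x lam * (r : ℚ) = 0 := by
        have h1' : x lam * 1 + x nu' * 1 = 0 := hE1'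
        nlinarith [hE1', hE2']
      have : (r : ℚ) ≠ 0 := by
        exact_mod_cast (by omega : r ≠ 0)
      exact hxlam_ne (by
        rcases mul_eq_zero.1 hfin with h | h
        · exact h
        · exact absurd h this)
    · -- r = 1 : only cover in the support is lam
      have hr1' : r = 1 := by omega
      have hvanish : ∀ (g : YoungDiagram → ℚ), (∀ ν, ¬ Covers mu ν → g ν = 0) →
          ∀ ν ∈ x.support, ν ∉ ({lam} : Finset YoungDiagram) → x ν * g ν = 0 := by
        intro g hg ν hν hνP
        by_cases hcov : Covers mu ν
        · rcases hclass ν hcov with h | ⟨h2, _⟩ | h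
          · exact absurd h (by intro he; exact hνP (by rw [he]; exact Finset.mem_singleton_self _))
          · omega
          · exact absurd h (hnotbig ν hν)
        · rw [hg ν hcov, mul_zero]
      have hE1' : x lam * 1 = 0 := by
        have hs : ∑ ν ∈ ({lam} : Finset YoungDiagram),
            x ν * (if Covers mu ν then (1 : ℚ) else 0) = 0 :=
          ((shrink (fun ν => if Covers mu ν then (1 : ℚ) else 0) {lam}
            (hvanish _ (fun ν h => if_neg h))).symm.trans E1)
        rw [Finset.sum_singleton, if_pos hCov_lam] at hs
        exact hs
      rw [mul_one] at hE1'
      exact hxlam_ne hE1'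
  refine ⟨x ⊥, ?_⟩
  ext μ
  by_cases hμ : μ = ⊥
  · subst hμ
    rw [Finsupp.single_eq_same]
  · have hμs : μ ∉ x.support := fun h => hμ (key μ h)
    rw [Finsupp.notMem_support_iff] at hμs
    rw [hμs, Finsupp.single_eq_of_ne' (Ne.symm hμ)]
end

section
/- Given a finite nonnegative rational linear combination X of nonempty Young diagrams, X is uniquely determined by the pair (ξ(X), ∇(X)); that is, if X and Y are two such nonnegative combinations with ξ(X) = ξ(Y) and ∇(X) = ∇(Y), then X = Y. -/
namespace RecoverAux

/-- The weight of a diagram: the sum of `2 j + 1` over its cells `(i, j)`.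
Adding one cell in column `j` increases the weight by `2 j + 1`. -/
def wt (nu : YoungDiagram) : ℕ := ∑ c ∈ nu.cells, (2 * c.2 + 1)

lemma rowLen_eq_of_iff {mu : YoungDiagram} {i m : ℕ} (h : ∀ j, (i, j) ∈ mu ↔ j < m) :
    mu.rowLen i = m := by
  rcases Nat.lt_trichotomy (mu.rowLen i) m with hlt | he | hgt
  · have h2 := (h (mu.rowLen i)).mpr hlt
    rw [YoungDiagram.mem_iff_lt_rowLen] at h2; omega
  · exact he
  · have h2 := (h m).mp (YoungDiagram.mem_iff_lt_rowLen.mpr hgt); omega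

lemma covers_structure {mu nu : YoungDiagram} (h : Covers mu nu) :
    ∃ b : ℕ × ℕ, b ∉ mu.cells ∧ nu.cells = insert b mu.cells ∧ mu.rowLen b.1 = b.2 := by
  obtain ⟨hsub, hcard⟩ := h
  have h1 : (nu.cells \ mu.cells).card = 1 := by
    rw [Finset.card_sdiff_of_subset hsub]; omega
  obtain ⟨b, hb⟩ := Finset.card_eq_one.mp h1
  have hbmem : b ∈ nu.cells ∧ b ∉ mu.cells := by
    have hx : b ∈ nu.cells \ mu.cells := hb ▸ Finset.mem_singleton_self b
    exact ⟨(Finset.mem_sdiff.mp hx).1, (Finset.mem_sdiff.mp hx).2⟩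
  have hins : nu.cells = insert b mu.cells := by
    ext x
    constructor
    · intro hx
      by_cases hxmu : x ∈ mu.cells
      · exact Finset.mem_insert_of_mem hxmu
      · have hx2 : x ∈ nu.cells \ mu.cells := Finset.mem_sdiff.mpr ⟨hx, hxmu⟩
        rw [hb, Finset.mem_singleton] at hx2
        exact hx2 ▸ Finset.mem_insert_self _ _
    · intro hx
      rcases Finset.mem_insert.mp hx with rfl | hx
      · exact hbmem.1
      · exact hsub hx
  refine ⟨b, hbmem.2, hins, ?_⟩
  apply rowLen_eq_of_iff
  intro j
  constructor
  · intro hj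
    by_contra hge
    push_neg at hge
    have hble : b ≤ (b.1, j) := Prod.mk_le_mk.mpr ⟨le_refl _, hge⟩ |>.trans_eq (by simp)
    have : b ∈ mu := mu.isLowerSet hble hj
    exact hbmem.2 ((YoungDiagram.mem_cells b).mpr this)
  · intro hj
    have hbnu : b ∈ nu := (YoungDiagram.mem_cells b).mp hbmem.1
    have hle : ((b.1, j) : ℕ × ℕ) ≤ b := Prod.mk_le_mk.mpr ⟨le_refl _, le_of_lt hj⟩ |>.trans_eq (by simp)
    have hmemnu : (b.1, j) ∈ nu := nu.isLowerSet hle hbnu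
    have hmemnu' : ((b.1, j) : ℕ × ℕ) ∈ nu.cells := (YoungDiagram.mem_cells _).mpr hmemnu
    rw [hins] at hmemnu'
    rcases Finset.mem_insert.mp hmemnu' with heq | hmem
    · exfalso; have : j = b.2 := congrArg Prod.snd heq; omega
    · exact hmem

lemma covers_of_insert {mu nu : YoungDiagram} {b : ℕ × ℕ} (hb : b ∉ mu.cells)
    (h : nu.cells = insert b mu.cells) : Covers mu nu :=
  ⟨by rw [h]; exact Finset.subset_insert _ _,
   by rw [h, Finset.card_insert_of_notMem hb]⟩

lemma remContent_of_insert {mu nu : YoungDiagram} {b : ℕ × ℕ} (hb : b ∉ mu.cells)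
    (h : nu.cells = insert b mu.cells) : remContent mu nu = (b.2 : ℤ) - (b.1 : ℤ) := by
  unfold remContent
  rw [h]
  have hset : insert b mu.cells \ mu.cells = {b} := by
    ext x
    simp only [Finset.mem_sdiff, Finset.mem_insert, Finset.mem_singleton]
    constructor
    · rintro ⟨h1 | h1, h2⟩
      · exact h1
      · exact absurd h1 h2
    · rintro rfl; exact ⟨Or.inl rfl, hb⟩
  rw [hset, Finset.sum_singleton]

lemma wt_of_insert {mu nu : YoungDiagram} {b : ℕ × ℕ} (hb : b ∉ mu.cells)
    (h : nu.cells = insert b mu.cells) : wt nu = wt mu + (2 * b.2 + 1) := by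
  unfold wt
  rw [h, Finset.sum_insert hb]
  omega

lemma wt_lt {lam : YoungDiagram} (h : lam.cells.Nonempty) :
    wt lam < 2 * lam.cells.card ^ 2 := by
  have hcard : 0 < lam.cells.card := Finset.card_pos.mpr h
  have hb : ∀ c ∈ lam.cells, 2 * c.2 + 1 ≤ 2 * (lam.cells.card - 1) + 1 := by
    intro c hc
    have : c.2 + 1 ≤ lam.cells.card := by
      have hsub : (Finset.range (c.2 + 1)).image (fun j => (c.1, j)) ⊆ lam.cells := by
        intro x hx
        simp only [Finset.mem_image, Finset.mem_range] at hx
        obtain ⟨j, hj, rfl⟩ := hx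
        have hle : ((c.1, j) : ℕ × ℕ) ≤ c := by
          have := Prod.mk.eta (p := c)
          rw [← this]
          exact Prod.mk_le_mk.mpr ⟨le_refl _, by omega⟩
        exact (YoungDiagram.mem_cells _).mpr (lam.isLowerSet hle ((YoungDiagram.mem_cells c).mp hc))
      have := Finset.card_le_card hsub
      rwa [Finset.card_image_of_injective _ (fun a b hab => (Prod.mk.injEq _ _ _ _).mp hab |>.2),
        Finset.card_range] at this
    omega
  have := Finset.sum_le_card_nsmul lam.cells (fun c => 2 * c.2 + 1) (2 * (lam.cells.card - 1) + 1) hb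
  simp only [smul_eq_mul] at this
  obtain ⟨m, hm⟩ : ∃ m, lam.cells.card = m + 1 := ⟨_, (Nat.succ_pred_eq_of_pos hcard).symm⟩
  unfold wt
  rw [hm] at this ⊢
  simp only [Nat.add_sub_cancel] at this
  nlinarith [this]

/-- Classification of the covers of `mu = lam` minus its lowest corner `(r, l1)`. -/
lemma classify {lam mu nu : YoungDiagram} {r l1 : ℕ}
    (hcol : lam.colLen 0 = r + 1) (hrow : lam.rowLen r = l1 + 1)
    (hmu : mu.cells = lam.cells.erase (r, l1))
    (hc : Covers mu nu) :
    nu = lam ∨ nu.cells = insert (r + 1, 0) mu.cells ∨ wt lam < wt nu := by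
  have hcorner : ((r, l1) : ℕ × ℕ) ∈ lam.cells := by
    rw [YoungDiagram.mem_cells, YoungDiagram.mem_iff_lt_rowLen, hrow]; omega
  have hnotmu : ((r, l1) : ℕ × ℕ) ∉ mu.cells := by
    rw [hmu]; exact Finset.notMem_erase _ _
  have hlamins : lam.cells = insert (r, l1) mu.cells := by
    rw [hmu, Finset.insert_erase hcorner]
  have hnotrow : ∀ i x, r < i → ((i, x) : ℕ × ℕ) ∉ lam := by
    intro i x hi hmem
    have h0 : ((i, 0) : ℕ × ℕ) ∈ lam := lam.isLowerSet (Prod.mk_le_mk.mpr ⟨le_refl _, Nat.zero_le _⟩) hmem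
    rw [YoungDiagram.mem_iff_lt_colLen, hcol] at h0
    omega
  have hmurow_r : mu.rowLen r = l1 := by
    apply rowLen_eq_of_iff
    intro j
    rw [← YoungDiagram.mem_cells, hmu, Finset.mem_erase, YoungDiagram.mem_cells,
      YoungDiagram.mem_iff_lt_rowLen, hrow]
    constructor
    · rintro ⟨hne, hlt⟩
      rcases Nat.lt_or_ge j l1 with h | h
      · exact h
      · exfalso; apply hne; have : j = l1 := by omega
        rw [this]
    · intro hj
      refine ⟨?_, by omega⟩
      intro he
      have : j = l1 := congrArg Prod.snd he
      omega
  have hmurow_lt : ∀ i, i < r → mu.rowLen i = lam.rowLen i := by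
    intro i hi
    apply rowLen_eq_of_iff
    intro j
    rw [← YoungDiagram.mem_cells, hmu, Finset.mem_erase, YoungDiagram.mem_cells,
      YoungDiagram.mem_iff_lt_rowLen]
    constructor
    · exact fun h => h.2
    · intro hj
      refine ⟨?_, hj⟩
      intro he
      have : i = r := congrArg Prod.fst he
      omega
  obtain ⟨b, hbnot, hbins, hbrow⟩ := covers_structure hc
  rcases Nat.lt_trichotomy b.1 r with hb1 | hb1 | hb1
  · right; right
    have h1 : lam.rowLen r ≤ lam.rowLen b.1 := lam.rowLen_anti _ _ (le_of_lt hb1)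
    have h2 : b.2 = lam.rowLen b.1 := by rw [← hbrow, hmurow_lt _ hb1]
    rw [wt_of_insert hbnot hbins, wt_of_insert hnotmu hlamins]
    omega
  · left
    have h2 : b.2 = l1 := by rw [← hbrow, hb1, hmurow_r]
    have hb : b = ((r, l1) : ℕ × ℕ) := Prod.ext hb1 h2
    apply YoungDiagram.ext
    rw [hbins, hb, hlamins]
  · right; left
    have h2 : b.2 = 0 := by
      rw [← hbrow]
      apply rowLen_eq_of_iff
      intro j
      rw [← YoungDiagram.mem_cells, hmu, Finset.mem_erase, YoungDiagram.mem_cells]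
      constructor
      · intro h; exact absurd h.2 (hnotrow _ _ hb1)
      · intro h; exact absurd h (Nat.not_lt_zero j)
    have hb1' : b.1 = r + 1 := by
      by_contra hne
      have hgt : r + 1 < b.1 := by omega
      have hbnu : b ∈ nu := by
        rw [← YoungDiagram.mem_cells, hbins]; exact Finset.mem_insert_self _ _
      have hmem : ((r + 1, 0) : ℕ × ℕ) ∈ nu :=
        nu.isLowerSet (by rw [← Prod.mk.eta (p := b)]; exact Prod.mk_le_mk.mpr ⟨by omega, by omega⟩) hbnu
      rw [← YoungDiagram.mem_cells, hbins, Finset.mem_insert] at hmem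
      rcases hmem with he | hmem
      · have : r + 1 = b.1 := congrArg Prod.fst he
        omega
      · have : ((r + 1, 0) : ℕ × ℕ) ∈ lam.cells := by
          rw [hmu] at hmem; exact Finset.mem_of_mem_erase hmem
        exact hnotrow _ _ (by omega) ((YoungDiagram.mem_cells _).mp this)
    have hb : b = ((r + 1, 0) : ℕ × ℕ) := Prod.ext hb1' h2
    rw [hbins, hb]

lemma sum_eq_pair {s : Finset YoungDiagram} {f : YoungDiagram → ℚ} {a b : YoungDiagram}
    (hab : a ≠ b) (h0 : ∀ x ∈ s, f x ≠ 0 → x = a ∨ x = b)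
    (ha : a ∉ s → f a = 0) (hb : b ∉ s → f b = 0) :
    ∑ x ∈ s, f x = f a + f b := by
  classical
  have h1 : ∑ x ∈ s, f x = ∑ x ∈ s.filter (fun x => x = a ∨ x = b), f x :=
    (Finset.sum_filter_of_ne h0).symm
  rw [h1]
  have h2 : s.filter (fun x => x = a ∨ x = b) ⊆ {a, b} := by
    intro x hx
    simp only [Finset.mem_filter] at hx
    simp only [Finset.mem_insert, Finset.mem_singleton]
    exact hx.2
  rw [Finset.sum_subset h2 ?_, Finset.sum_pair hab]
  intro x hx hnx
  simp only [Finset.mem_insert, Finset.mem_singleton] at hx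
  rcases hx with rfl | rfl
  · exact ha (fun hs => hnx (Finset.mem_filter.mpr ⟨hs, Or.inl rfl⟩))
  · exact hb (fun hs => hnx (Finset.mem_filter.mpr ⟨hs, Or.inr rfl⟩))

lemma apply_eq_sum (T : (YoungDiagram →₀ ℚ) →ₗ[ℚ] (YoungDiagram →₀ ℚ))
    (g : YoungDiagram → YoungDiagram → ℚ)
    (hT : ∀ lam mu, T (Finsupp.single lam 1) mu = g lam mu)
    (Z : YoungDiagram →₀ ℚ) (mu : YoungDiagram) :
    T Z mu = ∑ nu ∈ Z.support, Z nu * g nu mu := by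
  classical
  have hz : Z = ∑ nu ∈ Z.support, Finsupp.single nu (Z nu) := by
    ext a
    rw [Finsupp.finset_sum_apply]
    simp only [Finsupp.single_apply]
    rw [Finset.sum_ite_eq' Z.support a (fun nu => Z nu)]
    by_cases h : a ∈ Z.support
    · rw [if_pos h]
    · rw [if_neg h]
      exact Finsupp.notMem_support_iff.mp h
  calc T Z mu = (∑ nu ∈ Z.support, T (Finsupp.single nu (Z nu))) mu := by
        rw [← map_sum, ← hz]
    _ = ∑ nu ∈ Z.support, (T (Finsupp.single nu (Z nu))) mu := by
        rw [Finsupp.finset_sum_apply]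
    _ = ∑ nu ∈ Z.support, Z nu * g nu mu := by
        apply Finset.sum_congr rfl
        intro nu _
        have hs : Finsupp.single nu (Z nu) = Z nu • Finsupp.single nu (1 : ℚ) := by
          rw [Finsupp.smul_single, smul_eq_mul, mul_one]
        rw [hs, map_smul, Finsupp.smul_apply, hT, smul_eq_mul]

end RecoverAux

/-- A nonnegative rational linear combination of nonempty Young diagrams is uniquely
determined by its images under `ξ` and `∇`. -/
theorem recover_from_xi_nabla
    (xi nabla : (YoungDiagram →₀ ℚ) →ₗ[ℚ] (YoungDiagram →₀ ℚ))
    (hxi : ∀ lam mu : YoungDiagram,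
      xi (Finsupp.single lam 1) mu = if Covers mu lam then 1 else 0)
    (hnabla : ∀ lam mu : YoungDiagram,
      nabla (Finsupp.single lam 1) mu =
        if Covers mu lam then (remContent mu lam : ℚ) else 0)
    (X Y : YoungDiagram →₀ ℚ)
    (hXpos : ∀ lam, 0 ≤ X lam) (hXempty : X (⊥ : YoungDiagram) = 0)
    (hYpos : ∀ lam, 0 ≤ Y lam) (hYempty : Y (⊥ : YoungDiagram) = 0)
    (h1 : xi X = xi Y) (h2 : nabla X = nabla Y) :
    X = Y := by
  classical
  set D : YoungDiagram →₀ ℚ := X - Y with hDdef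
  have hbot : D ⊥ = 0 := by
    rw [hDdef, Finsupp.sub_apply, hXempty, hYempty, sub_zero]
  have hD0 : ∀ mu : YoungDiagram,
      ∑ nu ∈ D.support, D nu * (if Covers mu nu then (1 : ℚ) else 0) = 0 := by
    intro mu
    have h := RecoverAux.apply_eq_sum xi (fun lam mu => if Covers mu lam then (1 : ℚ) else 0)
      hxi D mu
    have hzero : xi D = 0 := by rw [hDdef, map_sub, h1, sub_self]
    rw [← h, hzero]
    simp
  have hD1 : ∀ mu : YoungDiagram,
      ∑ nu ∈ D.support, D nu * (if Covers mu nu then ((remContent mu nu : ℤ) : ℚ) else 0) = 0 := by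
    intro mu
    have h := RecoverAux.apply_eq_sum nabla
      (fun lam mu => if Covers mu lam then ((remContent mu lam : ℤ) : ℚ) else 0) hnabla D mu
    have hzero : nabla D = 0 := by rw [hDdef, map_sub, h2, sub_self]
    rw [← h, hzero]
    simp
  have main : ∀ t : ℕ, ∀ lam : YoungDiagram,
      2 * lam.cells.card ^ 2 ≤ RecoverAux.wt lam + t → D lam = 0 := by
    intro t
    induction t with
    | zero =>
      intro lam hle
      have hbotlam : lam = ⊥ := by
        by_contra hne
        have hnonempty : lam.cells.Nonempty := by
          rw [Finset.nonempty_iff_ne_empty]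
          intro hemp
          exact hne (YoungDiagram.ext (by rw [hemp, YoungDiagram.cells_bot]))
        have hlt := RecoverAux.wt_lt hnonempty
        have hle' : 2 * lam.cells.card ^ 2 ≤ RecoverAux.wt lam := by simpa using hle
        exact lt_irrefl _ (lt_of_le_of_lt hle' hlt)
      rw [hbotlam]; exact hbot
    | succ t ih =>
      intro lam hle
      by_cases hne : lam = ⊥
      · rw [hne]; exact hbot
      have hnonempty : lam.cells.Nonempty := by
        rw [Finset.nonempty_iff_ne_empty]
        intro hemp
        exact hne (YoungDiagram.ext (by rw [hemp, YoungDiagram.cells_bot]))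
      obtain ⟨c0, hc0⟩ := hnonempty
      have h00 : ((0, 0) : ℕ × ℕ) ∈ lam :=
        lam.isLowerSet (Prod.le_def.mpr ⟨Nat.zero_le _, Nat.zero_le _⟩)
          ((YoungDiagram.mem_cells _).mp hc0)
      have hcolpos : 0 < lam.colLen 0 := YoungDiagram.mem_iff_lt_colLen.mp h00
      obtain ⟨r, hcol⟩ : ∃ r, lam.colLen 0 = r + 1 := ⟨_, (Nat.succ_pred_eq_of_pos hcolpos).symm⟩
      have hr0 : ((r, 0) : ℕ × ℕ) ∈ lam := YoungDiagram.mem_iff_lt_colLen.mpr (by omega)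
      have hrowpos : 0 < lam.rowLen r := by
        have := YoungDiagram.mem_iff_lt_rowLen.mp hr0; omega
      obtain ⟨l1, hrow⟩ : ∃ m, lam.rowLen r = m + 1 := ⟨_, (Nat.succ_pred_eq_of_pos hrowpos).symm⟩
      have hcorner : ((r, l1) : ℕ × ℕ) ∈ lam.cells := by
        rw [YoungDiagram.mem_cells, YoungDiagram.mem_iff_lt_rowLen, hrow]; omega
      have hlower : IsLowerSet (↑(lam.cells.erase (r, l1)) : Set (ℕ × ℕ)) := by
        rintro ⟨a1, a2⟩ ⟨b1, b2⟩ hba ha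
        simp only [Finset.coe_erase, Set.mem_diff, Finset.mem_coe, Set.mem_singleton_iff]
          at ha ⊢
        obtain ⟨ha1, ha2⟩ := ha
        obtain ⟨hle1, hle2⟩ := Prod.mk_le_mk.mp hba
        have hblam : ((b1, b2) : ℕ × ℕ) ∈ lam :=
          lam.isLowerSet hba ((YoungDiagram.mem_cells _).mp ha1)
        refine ⟨(YoungDiagram.mem_cells _).mpr hblam, ?_⟩
        intro he
        have hb1 : b1 = r := congrArg Prod.fst he
        have hb2 : b2 = l1 := congrArg Prod.snd he
        rw [hb1] at hle1
        rw [hb2] at hle2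
        have halam : ((a1, a2) : ℕ × ℕ) ∈ lam := (YoungDiagram.mem_cells _).mp ha1
        have hc1 : a1 < lam.colLen a2 := YoungDiagram.mem_iff_lt_colLen.mp halam
        have hc2 : lam.colLen a2 ≤ lam.colLen 0 := lam.colLen_anti 0 a2 (Nat.zero_le _)
        have ha1r : a1 = r := by omega
        have hr2 : a2 < lam.rowLen a1 := YoungDiagram.mem_iff_lt_rowLen.mp halam
        rw [ha1r, hrow] at hr2
        exact ha2 (Prod.ext ha1r (by omega))
      set mu : YoungDiagram := ⟨lam.cells.erase (r, l1), hlower⟩ with hmudef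
      have hmu : mu.cells = lam.cells.erase (r, l1) := rfl
      have hnotmu : ((r, l1) : ℕ × ℕ) ∉ mu.cells := by
        rw [hmu]; exact Finset.notMem_erase _ _
      have hlamins : lam.cells = insert (r, l1) mu.cells := by
        rw [hmu, Finset.insert_erase hcorner]
      have hcovlam : Covers mu lam := RecoverAux.covers_of_insert hnotmu hlamins
      have hwtlam : RecoverAux.wt lam = RecoverAux.wt mu + (2 * l1 + 1) :=
        RecoverAux.wt_of_insert hnotmu hlamins
      have hcontlam : remContent mu lam = (l1 : ℤ) - (r : ℤ) := by
        have := RecoverAux.remContent_of_insert hnotmu hlamins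
        simpa using this
      have hIH0 : ∀ nu, Covers mu nu → RecoverAux.wt lam < RecoverAux.wt nu → D nu = 0 := by
        intro nu hcnu hwt
        apply ih
        have hcard : nu.cells.card = lam.cells.card := by rw [hcnu.2, hcovlam.2]
        rw [hcard]
        exact le_trans hle (by omega)
      by_cases hex : ∃ nu' : YoungDiagram, nu'.cells = insert (r + 1, 0) mu.cells
      · obtain ⟨nu', hnu'⟩ := hex
        have hnotmu' : ((r + 1, 0) : ℕ × ℕ) ∉ mu.cells := by
          rw [hmu]
          intro hmem
          have hm2 : ((r + 1, 0) : ℕ × ℕ) ∈ lam.cells := Finset.mem_of_mem_erase hmem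
          have hm3 := YoungDiagram.mem_iff_lt_colLen.mp ((YoungDiagram.mem_cells _).mp hm2)
          omega
        have hcovnu' : Covers mu nu' := RecoverAux.covers_of_insert hnotmu' hnu'
        have hcont' : remContent mu nu' = (0 : ℤ) - ((r : ℤ) + 1) := by
          have := RecoverAux.remContent_of_insert hnotmu' hnu'
          simpa using this
        have hlamne : lam ≠ nu' := by
          intro he
          have hm2 : ((r, l1) : ℕ × ℕ) ∈ nu'.cells := he ▸ hcorner
          rw [hnu', Finset.mem_insert] at hm2
          rcases hm2 with hm2 | hm2
          · have : r = r + 1 := congrArg Prod.fst hm2; omega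
          · exact hnotmu hm2
        have hkey : ∀ g : YoungDiagram → ℚ, ∀ x ∈ D.support,
            D x * (if Covers mu x then g x else 0) ≠ 0 → x = lam ∨ x = nu' := by
          intro g x hx hfx
          have hcov : Covers mu x := by
            by_contra hnc
            rw [if_neg hnc, mul_zero] at hfx
            exact hfx rfl
          rcases RecoverAux.classify hcol hrow hmu hcov with h | h | h
          · exact Or.inl h
          · exact Or.inr (YoungDiagram.ext (h.trans hnu'.symm))
          · exfalso; rw [hIH0 x hcov h, zero_mul] at hfx; exact hfx rfl
        have hE0 := hD0 mu
        rw [RecoverAux.sum_eq_pair hlamne (hkey (fun _ => (1 : ℚ)))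
          (fun hns => by rw [Finsupp.notMem_support_iff.mp hns, zero_mul])
          (fun hns => by rw [Finsupp.notMem_support_iff.mp hns, zero_mul])] at hE0
        rw [if_pos hcovlam, if_pos hcovnu', mul_one, mul_one] at hE0
        have hE1 := hD1 mu
        rw [RecoverAux.sum_eq_pair hlamne (hkey (fun x => ((remContent mu x : ℤ) : ℚ)))
          (fun hns => by rw [Finsupp.notMem_support_iff.mp hns, zero_mul])
          (fun hns => by rw [Finsupp.notMem_support_iff.mp hns, zero_mul])] at hE1
        rw [if_pos hcovlam, if_pos hcovnu', hcontlam, hcont'] at hE1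
        have hcoef : D lam * ((l1 : ℚ) + 1) = 0 := by
          push_cast at hE1
          linear_combination hE1 - (0 - ((r : ℚ) + 1)) * hE0
        rcases mul_eq_zero.mp hcoef with h | h
        · exact h
        · exfalso
          have hpos : (0 : ℚ) < (l1 : ℚ) + 1 := by positivity
          rw [h] at hpos
          exact lt_irrefl 0 hpos
      · have hE0 := hD0 mu
        have hz0 : ∀ x ∈ D.support, x ≠ lam →
            D x * (if Covers mu x then (1 : ℚ) else 0) = 0 := by
          intro x hx hxne
          by_cases hcov : Covers mu x
          · rcases RecoverAux.classify hcol hrow hmu hcov with h | h | h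
            · exact absurd h hxne
            · exact absurd ⟨x, h⟩ hex
            · rw [hIH0 x hcov h, zero_mul]
          · rw [if_neg hcov, mul_zero]
        have hz1 : lam ∉ D.support → D lam * (if Covers mu lam then (1 : ℚ) else 0) = 0 := by
          intro h
          rw [Finsupp.notMem_support_iff.mp h, zero_mul]
        rw [Finset.sum_eq_single lam hz0 hz1] at hE0
        rw [if_pos hcovlam, mul_one] at hE0
        exact hE0
  have hall : ∀ lam, D lam = 0 := fun lam =>
    main (2 * lam.cells.card ^ 2) lam (Nat.le_add_left _ _)
  ext lam
  have h := hall lam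
  rw [hDdef, Finsupp.sub_apply] at h
  linarith
end

section
/- The operator ∇ on the ring of symmetric functions, defined on the Schur basis by ∇(s_λ) = Σ (j−i)·s_{λ'} summed over all λ' obtained from λ by deleting the box in position (i,j), satisfies the Leibniz rule: ∇(fg) = ∇(f)g + f∇(g). -/
/-- The one-row Young diagram `(k)`. -/
def rowYD (k : ℕ) : YoungDiagram := YoungDiagram.ofRowLens [k]
  (fun i j _ => by
    obtain ⟨i, hi⟩ := i; obtain ⟨j, hj⟩ := j
    simp at hi hj; subst hi; subst hj; exact le_rfl)

/-- The hook-shaped Young diagram `(r, 1^a)` (for `r ≥ 1`). -/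
def hookYD (r a : ℕ) : YoungDiagram where
  cells := ((Finset.range r).image fun j => (0, j)) ∪
    ((Finset.range (a + 1)).image fun i => (i, 0))
  isLowerSet := by
    intro x y hxy hy
    obtain ⟨h1, h2⟩ : y.1 ≤ x.1 ∧ y.2 ≤ x.2 := Prod.le_def.mp hxy
    simp only [Finset.coe_union, Finset.coe_image, Finset.coe_range, Set.mem_union,
      Set.mem_image, Set.mem_Iio] at hy ⊢
    rcases hy with ⟨j, hj, hje⟩ | ⟨i, hi, hie⟩
    · have hx1 : x.1 = 0 := by rw [← hje]
      have hx2 : x.2 = j := by rw [← hje]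
      left
      exact ⟨y.2, by omega, by
        have hy1 : y.1 = 0 := by omega
        rw [Prod.ext_iff]; exact ⟨hy1.symm, rfl⟩⟩
    · have hx1 : x.1 = i := by rw [← hie]
      have hx2 : x.2 = 0 := by rw [← hie]
      right
      exact ⟨y.1, by omega, by
        have hy2 : y.2 = 0 := by omega
        rw [Prod.ext_iff]; exact ⟨rfl, hy2.symm⟩⟩

/-- `mu / lam` is a horizontal strip: no two of its boxes lie in the same column. -/
def IsHStrip (lam mu : YoungDiagram) : Prop :=
  lam.cells ⊆ mu.cells ∧ ∀ c ∈ mu.cells, c ∉ lam.cells → (c.1 + 1, c.2) ∉ mu.cells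

instance (lam mu : YoungDiagram) : Decidable (IsHStrip lam mu) := by
  unfold IsHStrip; infer_instance

namespace NablaAux
open YoungDiagram Finset

lemma rowLen_eq_of {mu : YoungDiagram} {i m : ℕ} (h : ∀ j, (i, j) ∈ mu ↔ j < m) :
    mu.rowLen i = m := by
  have h1 : mu.rowLen i ≤ m := by
    by_contra hc
    push_neg at hc
    have : (i, m) ∈ mu := mem_iff_lt_rowLen.mpr hc
    exact absurd ((h m).mp this) (lt_irrefl m)
  have h2 : m ≤ mu.rowLen i := by
    rcases Nat.eq_zero_or_pos m with hm | hm
    · omega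
    · have : (i, m - 1) ∈ mu := (h (m-1)).mpr (by omega)
      have := mem_iff_lt_rowLen.mp this
      omega
  omega

lemma ext_rowLen {mu nu : YoungDiagram} (h : ∀ i, mu.rowLen i = nu.rowLen i) : mu = nu := by
  ext ⟨i, j⟩
  rw [YoungDiagram.mem_cells, YoungDiagram.mem_cells, mem_iff_lt_rowLen, mem_iff_lt_rowLen, h i]

lemma subset_iff_rowLen {mu nu : YoungDiagram} :
    mu.cells ⊆ nu.cells ↔ ∀ i, mu.rowLen i ≤ nu.rowLen i := by
  constructor
  · intro hs i
    rcases Nat.eq_zero_or_pos (mu.rowLen i) with h | h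
    · omega
    · have : (i, mu.rowLen i - 1) ∈ mu := mem_iff_lt_rowLen.mpr (by omega)
      have := mem_iff_lt_rowLen.mp (hs this)
      omega
  · rintro h ⟨i, j⟩ hc
    rw [YoungDiagram.mem_cells, mem_iff_lt_rowLen] at hc ⊢
    exact lt_of_lt_of_le hc (h i)

lemma rowLen_zero_of_card_le {mu : YoungDiagram} {i : ℕ} (h : mu.card ≤ i) :
    mu.rowLen i = 0 := by
  by_contra hc
  have hsub : (Finset.range (i+1)).image (fun l => (l, 0)) ⊆ mu.cells := by
    intro c hc'
    simp only [Finset.mem_image, Finset.mem_range] at hc'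
    obtain ⟨l, hl, rfl⟩ := hc'
    rw [YoungDiagram.mem_cells, mem_iff_lt_rowLen]
    have := mu.rowLen_anti l i (by omega)
    omega
  have hcard := Finset.card_le_card hsub
  rw [Finset.card_image_of_injective _ (fun x y hxy => by simpa using hxy)] at hcard
  simp only [Finset.card_range] at hcard
  exact absurd hcard (by unfold YoungDiagram.card at h; omega)

lemma card_eq_sum {mu : YoungDiagram} {N : ℕ} (hN : ∀ i, N ≤ i → mu.rowLen i = 0) :
    mu.card = ∑ i ∈ Finset.range N, mu.rowLen i := by
  have hcells : mu.cells = (Finset.range N).biUnion (fun i => mu.row i) := by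
    ext ⟨i, j⟩
    simp only [Finset.mem_biUnion, Finset.mem_range, mem_row_iff]
    constructor
    · intro h
      refine ⟨i, ?_, ⟨(YoungDiagram.mem_cells _).mp h, rfl⟩⟩
      by_contra hc
      have := hN i (by omega)
      have := mem_iff_lt_rowLen.mp ((YoungDiagram.mem_cells _).mp h)
      omega
    · rintro ⟨i', _, hmem, rfl⟩
      exact (YoungDiagram.mem_cells _).mpr hmem
  have hdisj : ∀ x ∈ Finset.range N, ∀ y ∈ Finset.range N, x ≠ y →
      Disjoint (mu.row x) (mu.row y) := by
    intro x _ y _ hxy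
    rw [Finset.disjoint_left]
    intro c hcx hcy
    rw [mem_row_iff] at hcx hcy
    exact hxy (hcx.2 ▸ hcy.2 ▸ rfl)
  unfold YoungDiagram.card
  rw [hcells, Finset.card_biUnion hdisj]
  exact Finset.sum_congr rfl (fun i _ => (mu.rowLen_eq_card (i := i)).symm)

lemma IsHStrip_iff {lam mu : YoungDiagram} :
    IsHStrip lam mu ↔ (∀ i, lam.rowLen i ≤ mu.rowLen i) ∧
      (∀ i, mu.rowLen (i+1) ≤ lam.rowLen i) := by
  constructor
  · rintro ⟨hsub, hcol⟩
    refine ⟨subset_iff_rowLen.mp hsub, fun i => ?_⟩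
    by_contra hc
    push_neg at hc
    set t := lam.rowLen i with ht
    have h1 : ((i+1 : ℕ), t) ∈ mu := mem_iff_lt_rowLen.mpr hc
    have h2 : ((i : ℕ), t) ∈ mu := mem_iff_lt_rowLen.mpr
      (lt_of_lt_of_le hc (mu.rowLen_anti i (i+1) (by omega)))
    have h3 : ((i : ℕ), t) ∉ lam := by
      rw [mem_iff_lt_rowLen]; omega
    exact hcol (i, t) ((YoungDiagram.mem_cells _).mpr h2)
      (fun hh => h3 ((YoungDiagram.mem_cells _).mp hh))
      ((YoungDiagram.mem_cells _).mpr h1)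
  · rintro ⟨h1, h2⟩
    refine ⟨subset_iff_rowLen.mpr h1, ?_⟩
    rintro ⟨i, j⟩ hc hnc hc2
    rw [YoungDiagram.mem_cells, mem_iff_lt_rowLen] at hc hc2
    rw [YoungDiagram.mem_cells, mem_iff_lt_rowLen] at hnc
    dsimp only at hc2
    have := h2 i
    omega

end NablaAux
namespace NablaAux
open YoungDiagram Finset

/-- A box can be added at the end of row `r`. -/
def Addable (nu : YoungDiagram) (r : ℕ) : Prop := r = 0 ∨ nu.rowLen r < nu.rowLen (r-1)

instance (nu : YoungDiagram) (r : ℕ) : Decidable (Addable nu r) := by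
  unfold Addable; infer_instance

/-- A box can be removed at the end of row `r`. -/
def Removable (lam : YoungDiagram) (r : ℕ) : Prop := lam.rowLen (r+1) < lam.rowLen r

instance (lam : YoungDiagram) (r : ℕ) : Decidable (Removable lam r) := by
  unfold Removable; infer_instance

/-- Add a box at the end of row `r` (if possible). -/
def grow (nu : YoungDiagram) (r : ℕ) : YoungDiagram :=
  if h : Addable nu r then
    { cells := insert (r, nu.rowLen r) nu.cells
      isLowerSet := by
        rintro ⟨i, j⟩ ⟨i', j'⟩ hqp hp
        obtain ⟨hi, hj⟩ : i' ≤ i ∧ j' ≤ j := Prod.mk_le_mk.mp hqp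
        simp only [Finset.coe_insert, Set.mem_insert_iff, Finset.mem_coe] at hp ⊢
        rcases hp with hp | hp
        · rw [Prod.mk.injEq] at hp
          obtain ⟨hir, hjr⟩ := hp
          by_cases hq : i' = r ∧ j' = nu.rowLen r
          · left; rw [hq.1, hq.2]
          · right
            rw [YoungDiagram.mem_cells, mem_iff_lt_rowLen]
            by_cases hi'r : i' = r
            · have hne : j' ≠ nu.rowLen r := fun hh => hq ⟨hi'r, hh⟩
              rw [hi'r]
              omega
            · have hlt : i' < r := by omega
              have hr1 : nu.rowLen r < nu.rowLen (r-1) := by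
                rcases h with h | h
                · omega
                · exact h
              have := nu.rowLen_anti i' (r-1) (by omega)
              omega
        · right
          rw [YoungDiagram.mem_cells] at hp ⊢
          exact nu.up_left_mem hi hj hp }
  else nu

lemma rowLen_grow {nu : YoungDiagram} {r : ℕ} (h : Addable nu r) (i : ℕ) :
    (grow nu r).rowLen i = nu.rowLen i + (if i = r then 1 else 0) := by
  apply rowLen_eq_of
  intro j
  unfold grow
  rw [dif_pos h]
  show (i, j) ∈ insert (r, nu.rowLen r) nu.cells ↔ _
  rw [Finset.mem_insert, Prod.mk.injEq, YoungDiagram.mem_cells, mem_iff_lt_rowLen]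
  by_cases hir : i = r
  · have he : (if i = r then 1 else 0) = 1 := if_pos hir
    rw [he, hir]
    omega
  · simp only [if_neg hir]
    constructor
    · rintro (⟨h1, h2⟩ | h2)
      · exact absurd h1 hir
      · omega
    · intro hj; right; omega

lemma grow_sdiff {nu : YoungDiagram} {r : ℕ} (h : Addable nu r) :
    (grow nu r).cells \ nu.cells = {(r, nu.rowLen r)} := by
  have hnm : (r, nu.rowLen r) ∉ nu.cells := by
    rw [YoungDiagram.mem_cells, mem_iff_lt_rowLen]; omega
  unfold grow
  rw [dif_pos h]
  show insert (r, nu.rowLen r) nu.cells \ nu.cells = _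
  ext c
  simp only [Finset.mem_sdiff, Finset.mem_insert, Finset.mem_singleton]
  constructor
  · rintro ⟨hc | hc, hnc⟩
    · exact hc
    · exact absurd hc hnc
  · rintro rfl
    exact ⟨Or.inl rfl, hnm⟩

lemma card_grow {nu : YoungDiagram} {r : ℕ} (h : Addable nu r) :
    (grow nu r).card = nu.card + 1 := by
  have hnm : (r, nu.rowLen r) ∉ nu.cells := by
    rw [YoungDiagram.mem_cells, mem_iff_lt_rowLen]; omega
  unfold YoungDiagram.card grow
  rw [dif_pos h]
  exact Finset.card_insert_of_notMem hnm

lemma subset_grow {nu : YoungDiagram} {r : ℕ} : nu.cells ⊆ (grow nu r).cells := by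
  unfold grow
  split
  · exact Finset.subset_insert _ _
  · exact Finset.Subset.refl _

lemma covers_grow {nu : YoungDiagram} {r : ℕ} (h : Addable nu r) :
    Covers nu (grow nu r) :=
  ⟨subset_grow, card_grow h⟩

lemma remContent_grow {nu : YoungDiagram} {r : ℕ} (h : Addable nu r) :
    remContent nu (grow nu r) = (nu.rowLen r : ℤ) - r := by
  unfold remContent
  rw [grow_sdiff h, Finset.sum_singleton]

/-- Remove the last box of row `r` (if possible). -/
def shrink (lam : YoungDiagram) (r : ℕ) : YoungDiagram :=
  if h : Removable lam r then
    { cells := lam.cells.erase (r, lam.rowLen r - 1)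
      isLowerSet := by
        rintro ⟨i, j⟩ ⟨i', j'⟩ hqp hp
        obtain ⟨hi, hj⟩ : i' ≤ i ∧ j' ≤ j := Prod.mk_le_mk.mp hqp
        rw [Finset.mem_coe, Finset.mem_erase] at hp
        obtain ⟨hne, hmem⟩ := hp
        rw [YoungDiagram.mem_cells] at hmem
        have hmem' : (i', j') ∈ lam := lam.up_left_mem hi hj hmem
        rw [Finset.mem_coe, Finset.mem_erase]
        refine ⟨fun hc => ?_, (YoungDiagram.mem_cells _).mpr hmem'⟩
        rw [Prod.mk.injEq] at hc
        obtain ⟨rfl, rfl⟩ := hc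
        have hjlt : j < lam.rowLen i := mem_iff_lt_rowLen.mp hmem
        have hrem : lam.rowLen (i'+1) < lam.rowLen i' := h
        have hr0 : 0 < lam.rowLen i' := by omega
        by_cases hii : i = i'
        · subst hii
          exact hne (by rw [Prod.mk.injEq]; omega)
        · have : lam.rowLen i ≤ lam.rowLen (i'+1) := lam.rowLen_anti (i'+1) i (by omega)
          omega }
  else lam

lemma rowLen_shrink {lam : YoungDiagram} {r : ℕ} (h : Removable lam r) (i : ℕ) :
    (shrink lam r).rowLen i = lam.rowLen i - (if i = r then 1 else 0) := by
  apply rowLen_eq_of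
  intro j
  unfold shrink
  rw [dif_pos h]
  show (i, j) ∈ lam.cells.erase (r, lam.rowLen r - 1) ↔ _
  rw [Finset.mem_erase, ne_eq, Prod.mk.injEq, YoungDiagram.mem_cells, mem_iff_lt_rowLen]
  have hr : 0 < lam.rowLen r := by unfold Removable at h; omega
  by_cases hir : i = r
  · have he : (if i = r then 1 else 0) = 1 := if_pos hir
    have hli : lam.rowLen i = lam.rowLen r := by rw [hir]
    rw [he]
    constructor
    · rintro ⟨hne, hlt⟩
      have hj : j ≠ lam.rowLen r - 1 := fun hh => hne ⟨hir, hh⟩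
      omega
    · intro hj
      refine ⟨fun hc => ?_, by omega⟩
      have := hc.2
      omega
  · simp only [if_neg hir]
    simp only [not_and]
    constructor
    · rintro ⟨_, hlt⟩; omega
    · intro hj; exact ⟨fun hc => absurd hc hir, by omega⟩

lemma shrink_mem {lam : YoungDiagram} {r : ℕ} (h : Removable lam r) :
    (r, lam.rowLen r - 1) ∈ lam.cells := by
  rw [YoungDiagram.mem_cells, mem_iff_lt_rowLen]
  unfold Removable at h; omega

lemma shrink_sdiff {lam : YoungDiagram} {r : ℕ} (h : Removable lam r) :
    lam.cells \ (shrink lam r).cells = {(r, lam.rowLen r - 1)} := by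
  unfold shrink
  rw [dif_pos h]
  show lam.cells \ lam.cells.erase (r, lam.rowLen r - 1) = _
  ext c
  simp only [Finset.mem_sdiff, Finset.mem_erase, Finset.mem_singleton]
  constructor
  · rintro ⟨hc, hnc⟩
    by_contra hne
    exact hnc ⟨hne, hc⟩
  · rintro rfl
    exact ⟨shrink_mem h, fun hc => hc.1 rfl⟩

lemma card_shrink {lam : YoungDiagram} {r : ℕ} (h : Removable lam r) :
    lam.card = (shrink lam r).card + 1 := by
  unfold YoungDiagram.card shrink
  rw [dif_pos h]
  show lam.cells.card = (lam.cells.erase _).card + 1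
  rw [Finset.card_erase_of_mem (shrink_mem h)]
  have := Finset.card_pos.mpr ⟨_, shrink_mem h⟩
  omega

lemma shrink_subset {lam : YoungDiagram} {r : ℕ} : (shrink lam r).cells ⊆ lam.cells := by
  unfold shrink
  split
  · exact Finset.erase_subset _ _
  · exact Finset.Subset.refl _

lemma covers_shrink {lam : YoungDiagram} {r : ℕ} (h : Removable lam r) :
    Covers (shrink lam r) lam :=
  ⟨shrink_subset, card_shrink h⟩

lemma remContent_shrink {lam : YoungDiagram} {r : ℕ} (h : Removable lam r) :
    remContent (shrink lam r) lam = (lam.rowLen r : ℤ) - 1 - r := by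
  unfold remContent
  rw [shrink_sdiff h, Finset.sum_singleton]
  have hr : 0 < lam.rowLen r := by unfold Removable at h; omega
  push_cast [Nat.cast_sub hr]
  ring

/-- If two pointwise-comparable functions have sums differing by 1, they differ
in exactly one spot, by 1. -/
lemma exists_single_step (f g : ℕ → ℕ) (N : ℕ) (hfg : ∀ i, f i ≤ g i)
    (h : ∑ i ∈ Finset.range N, g i = (∑ i ∈ Finset.range N, f i) + 1) :
    ∃ r < N, g r = f r + 1 ∧ ∀ i < N, i ≠ r → g i = f i := by
  induction N with
  | zero => simp at h
  | succ n ih =>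
    rw [Finset.sum_range_succ, Finset.sum_range_succ] at h
    by_cases hn : g n = f n
    · obtain ⟨r, hr, h1, h2⟩ := ih (by omega)
      exact ⟨r, by omega, h1, fun i hi hne => by
        rcases Nat.lt_or_ge i n with h' | h'
        · exact h2 i h' hne
        · have : i = n := by omega
          subst this; exact hn⟩
    · have hgn : f n + 1 ≤ g n := by have := hfg n; omega
      have hsle : ∑ i ∈ Finset.range n, f i ≤ ∑ i ∈ Finset.range n, g i :=
        Finset.sum_le_sum (fun i _ => hfg i)
      have hsum_eq : ∑ i ∈ Finset.range n, g i = ∑ i ∈ Finset.range n, f i := by omega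
      have hgn' : g n = f n + 1 := by omega
      have hall : ∀ i < n, g i = f i := by
        intro i hi
        by_contra hc
        have hgi : f i + 1 ≤ g i := by have := hfg i; omega
        have : ∑ j ∈ Finset.range n, f j < ∑ j ∈ Finset.range n, g j :=
          Finset.sum_lt_sum (fun j _ => hfg j) ⟨i, Finset.mem_range.mpr hi, by omega⟩
        omega
      exact ⟨n, by omega, hgn', fun i hi hne => hall i (by omega)⟩

lemma card_cells_eq (mu : YoungDiagram) : mu.cells.card = mu.card := rfl

lemma covers_iff_grow {nu mu : YoungDiagram} :
    Covers nu mu ↔ ∃ r, Addable nu r ∧ mu = grow nu r := by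
  constructor
  · rintro ⟨hsub, hcard⟩
    have hrle : ∀ i, nu.rowLen i ≤ mu.rowLen i := subset_iff_rowLen.mp hsub
    have hmuN : ∀ i, mu.card ≤ i → mu.rowLen i = 0 := fun i hi => rowLen_zero_of_card_le hi
    have hnuN : ∀ i, mu.card ≤ i → nu.rowLen i = 0 := by
      intro i hi
      apply rowLen_zero_of_card_le
      have h1 := card_cells_eq mu
      have h2 := card_cells_eq nu
      omega
    have hsum : ∑ i ∈ Finset.range mu.card, mu.rowLen i
        = (∑ i ∈ Finset.range mu.card, nu.rowLen i) + 1 := by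
      rw [← card_eq_sum hmuN, ← card_eq_sum hnuN]
      have h1 := card_cells_eq mu
      have h2 := card_cells_eq nu
      omega
    obtain ⟨r, hrN, h1, h2⟩ := exists_single_step _ _ mu.card hrle hsum
    have hadd : Addable nu r := by
      rcases Nat.eq_zero_or_pos r with hr0 | hr0
      · exact Or.inl hr0
      · refine Or.inr ?_
        have he : nu.rowLen (r-1) = mu.rowLen (r-1) := (h2 (r-1) (by omega) (by omega)).symm
        have := mu.rowLen_anti (r-1) r (by omega)
        omega
    refine ⟨r, hadd, ext_rowLen (fun i => ?_)⟩
    rw [rowLen_grow hadd]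
    rcases Nat.lt_or_ge i mu.card with hiN | hiN
    · by_cases hir : i = r
      · have he : (if i = r then 1 else 0) = 1 := if_pos hir
        rw [he, hir]
        omega
      · simp only [if_neg hir]; rw [h2 i hiN hir]; omega
    · have hir : i ≠ r := by omega
      simp only [if_neg hir]
      rw [hmuN i hiN, hnuN i hiN]
  · rintro ⟨r, hadd, rfl⟩
    exact covers_grow hadd

lemma covers_iff_shrink {rho lam : YoungDiagram} :
    Covers rho lam ↔ ∃ r, Removable lam r ∧ rho = shrink lam r := by
  constructor
  · rintro ⟨hsub, hcard⟩
    have hrle : ∀ i, rho.rowLen i ≤ lam.rowLen i := subset_iff_rowLen.mp hsub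
    have hlamN : ∀ i, lam.card ≤ i → lam.rowLen i = 0 := fun i hi => rowLen_zero_of_card_le hi
    have hrhoN : ∀ i, lam.card ≤ i → rho.rowLen i = 0 := by
      intro i hi
      apply rowLen_zero_of_card_le
      have h1 := card_cells_eq lam
      have h2 := card_cells_eq rho
      omega
    have hsum : ∑ i ∈ Finset.range lam.card, lam.rowLen i
        = (∑ i ∈ Finset.range lam.card, rho.rowLen i) + 1 := by
      rw [← card_eq_sum hlamN, ← card_eq_sum hrhoN]
      have h1 := card_cells_eq lam
      have h2 := card_cells_eq rho
      omega
    obtain ⟨r, hrN, h1, h2⟩ := exists_single_step _ _ lam.card hrle hsum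
    have hrem : Removable lam r := by
      unfold Removable
      rcases Nat.lt_or_ge (r+1) lam.card with hr1 | hr1
      · have he : lam.rowLen (r+1) = rho.rowLen (r+1) := h2 (r+1) hr1 (by omega)
        have := rho.rowLen_anti r (r+1) (by omega)
        omega
      · have := hlamN (r+1) hr1
        omega
    refine ⟨r, hrem, ext_rowLen (fun i => ?_)⟩
    rw [rowLen_shrink hrem]
    rcases Nat.lt_or_ge i lam.card with hiN | hiN
    · by_cases hir : i = r
      · have he : (if i = r then 1 else 0) = 1 := if_pos hir
        rw [he, hir]
        omega
      · simp only [if_neg hir]; rw [h2 i hiN hir]; omega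
    · have hir : i ≠ r := by omega
      simp only [if_neg hir]
      rw [hlamN i hiN, hrhoN i hiN]
  · rintro ⟨r, hrem, rfl⟩
    exact covers_shrink hrem

lemma grow_injOn {nu : YoungDiagram} {r r' : ℕ} (h : Addable nu r) (h' : Addable nu r')
    (heq : grow nu r = grow nu r') : r = r' := by
  by_contra hc
  have h1 := rowLen_grow h r
  have h2 := rowLen_grow h' r
  rw [heq] at h1
  rw [if_pos rfl] at h1
  rw [if_neg hc] at h2
  omega

lemma shrink_injOn {lam : YoungDiagram} {r r' : ℕ} (h : Removable lam r) (h' : Removable lam r')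
    (heq : shrink lam r = shrink lam r') : r = r' := by
  by_contra hc
  have h1 := rowLen_shrink h r
  have h2 := rowLen_shrink h' r
  rw [heq] at h1
  rw [if_pos rfl] at h1
  rw [if_neg hc] at h2
  have hr : 0 < lam.rowLen r := by unfold Removable at h; omega
  omega

lemma addable_le {nu : YoungDiagram} {r : ℕ} (h : Addable nu r) : r ≤ nu.card := by
  rcases h with h | h
  · omega
  · by_contra hc
    have : nu.rowLen (r-1) = 0 := rowLen_zero_of_card_le (by omega)
    omega

lemma removable_lt {lam : YoungDiagram} {r : ℕ} (h : Removable lam r) : r < lam.card := by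
  unfold Removable at h
  by_contra hc
  have : lam.rowLen r = 0 := rowLen_zero_of_card_le (by omega)
  omega

end NablaAux
namespace NablaAux
open YoungDiagram Finset

lemma mem_rowYD {k i j : ℕ} : (i, j) ∈ rowYD k ↔ i = 0 ∧ j < k := by
  unfold rowYD
  refine YoungDiagram.mem_ofRowLens.trans ?_
  constructor
  · rintro ⟨h1, h2⟩
    simp only [List.length_singleton] at h1
    have : i = 0 := by omega
    subst this
    exact ⟨rfl, by simpa using h2⟩
  · rintro ⟨rfl, h⟩
    exact ⟨by simp, by simpa using h⟩

lemma rowLen_rowYD_zero (k : ℕ) : (rowYD k).rowLen 0 = k :=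
  rowLen_eq_of (fun j => by rw [mem_rowYD]; omega)

lemma rowLen_rowYD_pos (k : ℕ) {i : ℕ} (hi : i ≠ 0) : (rowYD k).rowLen i = 0 :=
  rowLen_eq_of (fun j => by rw [mem_rowYD]; omega)

lemma card_rowYD (k : ℕ) : (rowYD k).card = k := by
  rw [card_eq_sum (N := 1) (fun i hi => rowLen_rowYD_pos k (by omega))]
  simp [rowLen_rowYD_zero]

lemma bot_rowLen (i : ℕ) : (⊥ : YoungDiagram).rowLen i = 0 :=
  rowLen_eq_of (fun j => by simp [YoungDiagram.notMem_bot])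

lemma rowYD_zero : rowYD 0 = ⊥ :=
  ext_rowLen (fun i => by
    rw [bot_rowLen]
    rcases eq_or_ne i 0 with rfl | h
    · exact rowLen_rowYD_zero 0
    · exact rowLen_rowYD_pos 0 h)

lemma shrink_rowYD {k : ℕ} (hk : 1 ≤ k) (h : Removable (rowYD k) 0) :
    shrink (rowYD k) 0 = rowYD (k-1) :=
  ext_rowLen (fun i => by
    rw [rowLen_shrink h]
    rcases eq_or_ne i 0 with rfl | hi
    · rw [rowLen_rowYD_zero, rowLen_rowYD_zero, if_pos rfl]
    · rw [rowLen_rowYD_pos k hi, rowLen_rowYD_pos (k-1) hi, if_neg hi])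

lemma removable_rowYD {k : ℕ} (hk : 1 ≤ k) : Removable (rowYD k) 0 := by
  unfold Removable
  rw [rowLen_rowYD_zero, rowLen_rowYD_pos k (by omega)]
  omega

lemma covers_rowYD {k : ℕ} {mu : YoungDiagram} :
    Covers mu (rowYD k) ↔ 1 ≤ k ∧ mu = rowYD (k-1) := by
  constructor
  · intro h
    obtain ⟨r, hrem, rfl⟩ := covers_iff_shrink.mp h
    have hr1 : (rowYD k).rowLen (r+1) = 0 := rowLen_rowYD_pos k (by omega)
    have hr0 : r = 0 := by
      by_contra hc
      have := rowLen_rowYD_pos k hc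
      unfold Removable at hrem
      omega
    subst hr0
    have hk : 1 ≤ k := by
      unfold Removable at hrem
      rw [rowLen_rowYD_zero] at hrem
      omega
    exact ⟨hk, shrink_rowYD hk hrem⟩
  · rintro ⟨hk, rfl⟩
    rw [← shrink_rowYD hk (removable_rowYD hk)]
    exact covers_shrink (removable_rowYD hk)

lemma remContent_rowYD {k : ℕ} (hk : 1 ≤ k) :
    remContent (rowYD (k-1)) (rowYD k) = (k : ℤ) - 1 := by
  rw [← shrink_rowYD hk (removable_rowYD hk), remContent_shrink (removable_rowYD hk),
    rowLen_rowYD_zero]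
  push_cast
  ring

end NablaAux
namespace NablaAux
open Finset

/-- Condition for the term "add a box in row `r` of `ν`, forming a horizontal `k`-strip
over `λ`" (row-length form: `a` = rows of `λ`, `b` = rows of `ν`). -/
def AddC (a b : ℕ → ℕ) (k N r : ℕ) : Prop :=
  (r = 0 ∨ b r < b (r-1)) ∧
  (∑ i ∈ Finset.range N, b i) + 1 = (∑ i ∈ Finset.range N, a i) + k ∧
  (∀ i, a i ≤ b i + (if i = r then 1 else 0)) ∧
  (∀ i, b (i+1) + (if i + 1 = r then 1 else 0) ≤ a i)

/-- Condition for the term "remove a box in row `r` of `λ`, with `ν` a horizontal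
`k`-strip over the result". -/
def RemC (a b : ℕ → ℕ) (k N r : ℕ) : Prop :=
  (a (r+1) < a r) ∧
  (∑ i ∈ Finset.range N, b i) + 1 = (∑ i ∈ Finset.range N, a i) + k ∧
  (∀ i, a i - (if i = r then 1 else 0) ≤ b i) ∧
  (∀ i, b (i+1) ≤ a i - (if i = r then 1 else 0))

/-- Condition "`ν` is a horizontal `(k-1)`-strip over `λ`". -/
def MidC (a b : ℕ → ℕ) (k N : ℕ) : Prop :=
  (∑ i ∈ Finset.range N, b i) + 1 = (∑ i ∈ Finset.range N, a i) + k ∧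
  (∀ i, a i ≤ b i) ∧ (∀ i, b (i+1) ≤ a i)

/-- The key combinatorial identity behind the Leibniz rule. -/
lemma key (a b : ℕ → ℕ) (k N : ℕ)
    (ha : ∀ i j, i ≤ j → a j ≤ a i) (hb : ∀ i j, i ≤ j → b j ≤ b i)
    (hk : 1 ≤ k) (hN : 1 ≤ N) (hvan : ∀ i, N ≤ i + 1 → a i = 0 ∧ b i = 0)
    (F G : ℕ → ℚ) (c : ℚ)
    (hF : ∀ r, r < N → (AddC a b k N r → F r = (b r : ℚ) - r) ∧ (¬ AddC a b k N r → F r = 0))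
    (hG : ∀ r, r < N → (RemC a b k N r → G r = (a r : ℚ) - 1 - r) ∧ (¬ RemC a b k N r → G r = 0))
    (hc : (MidC a b k N → c = (k : ℚ) - 1) ∧ (¬ MidC a b k N → c = 0)) :
    ∑ r ∈ Finset.range N, F r = c + ∑ r ∈ Finset.range N, G r := by
  by_cases hS : (∑ i ∈ Finset.range N, b i) + 1 = (∑ i ∈ Finset.range N, a i) + k
  case neg =>
    have h1 : ∑ r ∈ Finset.range N, F r = 0 :=
      Finset.sum_eq_zero (fun r hr => (hF r (Finset.mem_range.mp hr)).2 (fun hA => hS hA.2.1))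
    have h2 : ∑ r ∈ Finset.range N, G r = 0 :=
      Finset.sum_eq_zero (fun r hr => (hG r (Finset.mem_range.mp hr)).2 (fun hA => hS hA.2.1))
    have h3 : c = 0 := hc.2 (fun hM => hS hM.1)
    rw [h1, h2, h3]; ring
  case pos =>
  by_cases hP2 : ∀ i, b (i+1) ≤ a i
  case neg =>
    push_neg at hP2
    obtain ⟨i0, h0⟩ := hP2
    have h1 : ∑ r ∈ Finset.range N, F r = 0 :=
      Finset.sum_eq_zero (fun r hr => (hF r (Finset.mem_range.mp hr)).2 (fun hA => by
        have := hA.2.2.2 i0; omega))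
    have h2 : ∑ r ∈ Finset.range N, G r = 0 :=
      Finset.sum_eq_zero (fun r hr => (hG r (Finset.mem_range.mp hr)).2 (fun hA => by
        have := hA.2.2.2 i0; omega))
    have h3 : c = 0 := hc.2 (fun hM => by have := hM.2.2 i0; omega)
    rw [h1, h2, h3]; ring
  case pos =>
  by_cases hP1 : ∀ i, a i ≤ b i
  case pos =>
    -- Main case: ν/λ is a horizontal strip.
    have hcm : c = (k : ℚ) - 1 := hc.1 ⟨hS, hP1, hP2⟩
    have hAddIff : ∀ r, AddC a b k N r ↔ (r = 0 ∨ b r < a (r-1)) := by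
      intro r
      constructor
      · rintro ⟨h1, _, _, h4⟩
        rcases Nat.eq_zero_or_pos r with h | h
        · exact Or.inl h
        · right
          have h5 := h4 (r-1)
          have he : r - 1 + 1 = r := by omega
          rw [he] at h5
          have he2 : (if r = r then 1 else 0) = 1 := if_pos rfl
          omega
      · intro h1
        refine ⟨?_, hS, fun i => by have := hP1 i; omega, fun i => ?_⟩
        · rcases h1 with h | h
          · exact Or.inl h
          · exact Or.inr (lt_of_lt_of_le h (hP1 (r-1)))
        · by_cases hi : i + 1 = r
          · have he : (if i + 1 = r then 1 else 0) = 1 := if_pos hi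
            rcases h1 with h | h
            · omega
            · have hri : r - 1 = i := by omega
              rw [hri] at h
              have hbb : b (i+1) = b r := by rw [hi]
              omega
          · have he : (if i + 1 = r then 1 else 0) = 0 := if_neg hi
            have := hP2 i
            omega
    have hRemIff : ∀ r, RemC a b k N r ↔ b (r+1) < a r := by
      intro r
      constructor
      · rintro ⟨h1, _, _, h4⟩
        have h5 := h4 r
        have he : (if r = r then 1 else 0) = 1 := if_pos rfl
        omega
      · intro h1
        refine ⟨lt_of_le_of_lt (hP1 (r+1)) h1, hS,
          fun i => by have := hP1 i; omega, fun i => ?_⟩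
        · by_cases hi : i = r
          · subst hi
            have he : (if i = i then 1 else 0) = 1 := if_pos rfl
            omega
          · have he : (if i = r then 1 else 0) = 0 := if_neg hi
            have := hP2 i
            omega
    obtain ⟨M, rfl⟩ : ∃ M, N = M + 1 := ⟨N - 1, by omega⟩
    have hGM : G M = 0 := (hG M (by omega)).2 (by
      rw [hRemIff]
      have := (hvan M (by omega)).1
      omega)
    have hF0v : F 0 = (b 0 : ℚ) := by
      have h := (hF 0 (by omega)).1 (by rw [hAddIff]; exact Or.inl rfl)
      simpa using h
    have hstep : ∀ r ∈ Finset.range M, F (r+1) = G r + ((b (r+1) : ℚ) - (a r : ℚ)) := by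
      intro r hr
      have hrM := Finset.mem_range.mp hr
      by_cases hB : b (r+1) < a r
      · have h1 := (hF (r+1) (by omega)).1 (by
          rw [hAddIff]
          right
          rw [Nat.add_sub_cancel]
          exact hB)
        have h2 := (hG r (by omega)).1 (by rw [hRemIff]; exact hB)
        rw [h1, h2]
        push_cast
        ring
      · have heq : b (r+1) = a r := le_antisymm (hP2 r) (by omega)
        have h1 := (hF (r+1) (by omega)).2 (by
          rw [hAddIff]
          rintro (h | h)
          · omega
          · rw [Nat.add_sub_cancel] at h
            omega)
        have h2 := (hG r (by omega)).2 (by rw [hRemIff]; exact hB)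
        rw [h1, h2, heq]
        ring
    rw [Finset.sum_range_succ' F, Finset.sum_range_succ G, Finset.sum_congr rfl hstep,
      Finset.sum_add_distrib, hF0v, hGM, hcm]
    have e1 : ∑ r ∈ Finset.range M, ((b (r+1) : ℚ) - (a r : ℚ))
        = (∑ r ∈ Finset.range M, (b (r+1) : ℚ)) - ∑ r ∈ Finset.range M, (a r : ℚ) :=
      Finset.sum_sub_distrib _ _
    have e2 : (∑ r ∈ Finset.range M, (b (r+1) : ℚ)) + (b 0 : ℚ)
        = ∑ i ∈ Finset.range (M+1), (b i : ℚ) := (Finset.sum_range_succ' (fun i => (b i : ℚ)) M).symm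
    have e3 : ∑ r ∈ Finset.range (M+1), (a r : ℚ)
        = (∑ r ∈ Finset.range M, (a r : ℚ)) + (a M : ℚ) := Finset.sum_range_succ _ M
    have e4 : (a M : ℚ) = 0 := by
      have := (hvan M (by omega)).1
      rw [this]; norm_num
    have e5 : (∑ i ∈ Finset.range (M+1), (b i : ℚ)) + 1
        = (∑ i ∈ Finset.range (M+1), (a i : ℚ)) + (k : ℚ) := by
      have := hS
      push_cast [← Nat.cast_sum] at this ⊢
      exact_mod_cast hS
    rw [e1]
    linarith [e2, e3, e4, e5]
  case neg =>
    -- λ is not contained in ν.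
    push_neg at hP1
    obtain ⟨i0, h0⟩ := hP1
    have hcm : c = 0 := hc.2 (fun hM => by have := hM.2.1 i0; omega)
    by_cases huniq : a i0 = b i0 + 1 ∧ ∀ i, i ≠ i0 → a i ≤ b i
    · -- unique off-by-one defect: both sides reduce to one equal term at i0
      obtain ⟨hu1, hu2⟩ := huniq
      have hi0N : i0 + 1 < N := by
        by_contra hcon
        have := (hvan i0 (by omega)).1
        omega
      have hFz : ∀ r ∈ Finset.range N, r ≠ i0 → F r = 0 := by
        intro r hr hne
        refine (hF r (Finset.mem_range.mp hr)).2 (fun hA => ?_)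
        have := hA.2.2.1 i0
        have he : (if i0 = r then 1 else 0) = 0 := if_neg (fun hh => hne hh.symm)
        omega
      have hGz : ∀ r ∈ Finset.range N, r ≠ i0 → G r = 0 := by
        intro r hr hne
        refine (hG r (Finset.mem_range.mp hr)).2 (fun hA => ?_)
        have := hA.2.2.1 i0
        have he : (if i0 = r then 1 else 0) = 0 := if_neg (fun hh => hne hh.symm)
        omega
      have hAdd : AddC a b k N i0 := by
        refine ⟨?_, hS, fun i => ?_, fun i => ?_⟩
        · rcases Nat.eq_zero_or_pos i0 with h | h
          · exact Or.inl h
          · right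
            have h1 := hu2 (i0-1) (by omega)
            have h2 := ha (i0-1) i0 (by omega)
            omega
        · by_cases hi : i = i0
          · subst hi
            have he : (if i = i then 1 else 0) = 1 := if_pos rfl
            omega
          · have he : (if i = i0 then 1 else 0) = 0 := if_neg hi
            have := hu2 i hi
            omega
        · by_cases hi : i + 1 = i0
          · have he : (if i + 1 = i0 then 1 else 0) = 1 := if_pos hi
            have h2 := ha i i0 (by omega)
            have hbb : b (i+1) = b i0 := by rw [hi]
            omega
          · have he : (if i + 1 = i0 then 1 else 0) = 0 := if_neg hi
            have := hP2 i
            omega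
      have hRem : RemC a b k N i0 := by
        refine ⟨?_, hS, fun i => ?_, fun i => ?_⟩
        · have h1 := hu2 (i0+1) (by omega)
          have h2 := hb (i0+1) (i0+1) (le_refl _)
          have h3 := hb i0 (i0+1) (by omega)
          omega
        · by_cases hi : i = i0
          · subst hi
            have he : (if i = i then 1 else 0) = 1 := if_pos rfl
            omega
          · have he : (if i = i0 then 1 else 0) = 0 := if_neg hi
            have := hu2 i hi
            omega
        · by_cases hi : i = i0
          · subst hi
            have he : (if i = i then 1 else 0) = 1 := if_pos rfl
            have := hb i (i+1) (by omega)
            omega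
          · have he : (if i = i0 then 1 else 0) = 0 := if_neg hi
            have := hP2 i
            omega
      have hFv : F i0 = (b i0 : ℚ) - i0 := (hF i0 (by omega)).1 hAdd
      have hGv : G i0 = (a i0 : ℚ) - 1 - i0 := (hG i0 (by omega)).1 hRem
      rw [Finset.sum_eq_single_of_mem i0 (Finset.mem_range.mpr (by omega)) hFz,
        Finset.sum_eq_single_of_mem i0 (Finset.mem_range.mpr (by omega)) hGz,
        hFv, hGv, hcm]
      have : (a i0 : ℚ) = (b i0 : ℚ) + 1 := by exact_mod_cast congrArg (Nat.cast (R := ℚ)) hu1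
      rw [this]
      ring
    · -- defect is not a unique off-by-one: everything vanishes
      have h1 : ∑ r ∈ Finset.range N, F r = 0 := by
        refine Finset.sum_eq_zero (fun r hr => (hF r (Finset.mem_range.mp hr)).2 (fun hA => ?_))
        obtain ⟨_, _, h3, _⟩ := hA
        have hri : r = i0 := by
          by_contra hc'
          have := h3 i0
          have he : (if i0 = r then 1 else 0) = 0 := if_neg (fun hh => hc' hh.symm)
          omega
        subst hri
        refine huniq ⟨?_, fun i hi => ?_⟩
        · have := h3 r
          have he : (if r = r then 1 else 0) = 1 := if_pos rfl
          omega
        · have := h3 i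
          have he : (if i = r then 1 else 0) = 0 := if_neg hi
          omega
      have h2 : ∑ r ∈ Finset.range N, G r = 0 := by
        refine Finset.sum_eq_zero (fun r hr => (hG r (Finset.mem_range.mp hr)).2 (fun hA => ?_))
        obtain ⟨_, _, h3, _⟩ := hA
        have hri : r = i0 := by
          by_contra hc'
          have := h3 i0
          have he : (if i0 = r then 1 else 0) = 0 := if_neg (fun hh => hc' hh.symm)
          omega
        subst hri
        refine huniq ⟨?_, fun i hi => ?_⟩
        · have := h3 r
          have he : (if r = r then 1 else 0) = 1 := if_pos rfl
          have := ha r (r+1) (by omega)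
          omega
        · have := h3 i
          have he : (if i = r then 1 else 0) = 0 := if_neg hi
          omega
      rw [h1, h2, hcm]; ring

end NablaAux
namespace NablaAux
open YoungDiagram Finset

section Repr
variable {L : Type*} [CommRing L] [Algebra ℚ L] (s : Module.Basis YoungDiagram ℚ L)

lemma repr_apply_linear (T : L →ₗ[ℚ] L) (x : L) (nu : YoungDiagram) :
    s.repr (T x) nu = (s.repr x).sum (fun mu c => c * s.repr (T (s mu)) nu) := by
  conv_lhs => rw [← s.linearCombination_repr x]
  rw [Finsupp.linearCombination_apply, Finsupp.sum, map_sum, map_sum,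
    Finsupp.finset_sum_apply, Finsupp.sum]
  refine Finset.sum_congr rfl (fun mu _ => ?_)
  rw [map_smul, map_smul, Finsupp.smul_apply, smul_eq_mul]

lemma finsupp_sum_eq (f : YoungDiagram →₀ ℚ) (g : YoungDiagram → ℚ → ℚ)
    (hg : ∀ mu, g mu 0 = 0) (T : Finset YoungDiagram)
    (hT : ∀ mu ∉ T, g mu (f mu) = 0) :
    f.sum g = ∑ mu ∈ T, g mu (f mu) := by
  rw [Finsupp.sum]
  have e1 : ∑ mu ∈ f.support, g mu (f mu) = ∑ mu ∈ f.support ∪ T, g mu (f mu) :=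
    Finset.sum_subset Finset.subset_union_left (fun mu _ hmu => by
      rw [Finsupp.notMem_support_iff.mp hmu, hg])
  have e2 : ∑ mu ∈ T, g mu (f mu) = ∑ mu ∈ f.support ∪ T, g mu (f mu) :=
    Finset.sum_subset Finset.subset_union_right (fun mu _ hmu => hT mu hmu)
  rw [e1, e2]

variable (nabla : Module.End ℚ L)

lemma repr_nabla
    (hnabla : ∀ lam mu : YoungDiagram,
      s.repr (nabla (s lam)) mu = if Covers mu lam then (remContent mu lam : ℚ) else 0)
    (x : L) (nu : YoungDiagram) {N : ℕ} (hN : nu.card + 1 ≤ N) :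
    s.repr (nabla x) nu = ∑ r ∈ Finset.range N,
      (if Addable nu r then s.repr x (grow nu r) * ((nu.rowLen r : ℚ) - r) else 0) := by
  rw [repr_apply_linear s (nabla : L →ₗ[ℚ] L) x nu]
  rw [finsupp_sum_eq (s.repr x) (fun mu c => c * s.repr (nabla (s mu)) nu)
      (fun mu => zero_mul _)
      (((Finset.range N).filter (fun r => Addable nu r)).image (grow nu)) ?hT]
  case hT =>
    intro mu hmu
    by_cases hcov : Covers nu mu
    · exfalso
      obtain ⟨r, hadd, rfl⟩ := covers_iff_grow.mp hcov
      exact hmu (Finset.mem_image.mpr ⟨r, Finset.mem_filter.mpr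
        ⟨Finset.mem_range.mpr (by have := addable_le hadd; omega), hadd⟩, rfl⟩)
    · rw [hnabla, if_neg hcov, mul_zero]
  rw [Finset.sum_image (fun r hr r' hr' heq =>
    grow_injOn (Finset.mem_filter.mp hr).2 (Finset.mem_filter.mp hr').2 heq)]
  rw [Finset.sum_filter]
  refine Finset.sum_congr rfl (fun r _ => ?_)
  by_cases hadd : Addable nu r
  · rw [if_pos hadd, if_pos hadd, hnabla, if_pos (covers_grow hadd), remContent_grow hadd]
    push_cast
    ring
  · rw [if_neg hadd, if_neg hadd]

lemma repr_mul_nabla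
    (hnabla : ∀ lam mu : YoungDiagram,
      s.repr (nabla (s lam)) mu = if Covers mu lam then (remContent mu lam : ℚ) else 0)
    (hPieri : ∀ (k : ℕ) (lam mu : YoungDiagram),
      s.repr (s (rowYD k) * s lam) mu =
        if mu.cells.card = lam.cells.card + k ∧ IsHStrip lam mu then 1 else 0)
    (k : ℕ) (lam nu : YoungDiagram) {N : ℕ} (hN : lam.card + 1 ≤ N) :
    s.repr (s (rowYD k) * nabla (s lam)) nu = ∑ r ∈ Finset.range N,
      (if Removable lam r then
        ((lam.rowLen r : ℚ) - 1 - r) *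
          (if nu.cells.card = (shrink lam r).cells.card + k ∧ IsHStrip (shrink lam r) nu
            then 1 else 0)
        else 0) := by
  have hml : ∀ y : L, LinearMap.mulLeft ℚ (s (rowYD k)) y = s (rowYD k) * y :=
    fun y => rfl
  have : s (rowYD k) * nabla (s lam) = LinearMap.mulLeft ℚ (s (rowYD k)) (nabla (s lam)) := rfl
  rw [this, repr_apply_linear s (LinearMap.mulLeft ℚ (s (rowYD k))) (nabla (s lam)) nu]
  rw [finsupp_sum_eq (s.repr (nabla (s lam)))
      (fun mu c => c * s.repr (LinearMap.mulLeft ℚ (s (rowYD k)) (s mu)) nu)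
      (fun mu => zero_mul _)
      (((Finset.range N).filter (fun r => Removable lam r)).image (shrink lam)) ?hT]
  case hT =>
    intro rho hrho
    by_cases hcov : Covers rho lam
    · exfalso
      obtain ⟨r, hrem, rfl⟩ := covers_iff_shrink.mp hcov
      exact hrho (Finset.mem_image.mpr ⟨r, Finset.mem_filter.mpr
        ⟨Finset.mem_range.mpr (by have := removable_lt hrem; omega), hrem⟩, rfl⟩)
    · rw [hnabla, if_neg hcov, zero_mul]
  rw [Finset.sum_image (fun r hr r' hr' heq =>
    shrink_injOn (Finset.mem_filter.mp hr).2 (Finset.mem_filter.mp hr').2 heq)]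
  rw [Finset.sum_filter]
  refine Finset.sum_congr rfl (fun r _ => ?_)
  by_cases hrem : Removable lam r
  · rw [if_pos hrem, if_pos hrem, hml, hPieri, hnabla, if_pos (covers_shrink hrem),
      remContent_shrink hrem]
    push_cast
    ring
  · rw [if_neg hrem, if_neg hrem]

lemma nabla_rowYD
    (hnabla : ∀ lam mu : YoungDiagram,
      s.repr (nabla (s lam)) mu = if Covers mu lam then (remContent mu lam : ℚ) else 0)
    {k : ℕ} (hk : 1 ≤ k) :
    nabla (s (rowYD k)) = ((k : ℚ) - 1) • s (rowYD (k-1)) := by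
  apply s.repr.injective
  ext mu
  rw [hnabla, map_smul, Finsupp.smul_apply, s.repr_self, smul_eq_mul, Finsupp.single_apply]
  by_cases h : mu = rowYD (k-1)
  · rw [if_pos (covers_rowYD.mpr ⟨hk, h⟩), h, remContent_rowYD hk, if_pos rfl]
    push_cast
    ring
  · rw [if_neg (fun hc => h (covers_rowYD.mp hc).2), if_neg (fun hc => h hc.symm), mul_zero]

lemma nabla_bot
    (hnabla : ∀ lam mu : YoungDiagram,
      s.repr (nabla (s lam)) mu = if Covers mu lam then (remContent mu lam : ℚ) else 0) :
    nabla (s (⊥ : YoungDiagram)) = 0 := by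
  apply s.repr.injective
  ext mu
  rw [hnabla, map_zero]
  have : ¬ Covers mu (⊥ : YoungDiagram) := by
    rintro ⟨_, hcard⟩
    rw [YoungDiagram.cells_bot] at hcard
    simp at hcard
  rw [if_neg this]
  simp

end Repr
end NablaAux
namespace NablaAux
open YoungDiagram Finset

lemma addC_iff {lam nu : YoungDiagram} {k N r : ℕ}
    (hsA : lam.card = ∑ i ∈ Finset.range N, lam.rowLen i)
    (hsB : nu.card = ∑ i ∈ Finset.range N, nu.rowLen i) :
    (Addable nu r ∧ (grow nu r).cells.card = lam.cells.card + k ∧ IsHStrip lam (grow nu r))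
      ↔ AddC lam.rowLen nu.rowLen k N r := by
  constructor
  · rintro ⟨hadd, hcard, hstrip⟩
    obtain ⟨hs1, hs2⟩ := IsHStrip_iff.mp hstrip
    refine ⟨hadd, ?_, fun i => ?_, fun i => ?_⟩
    · have hg := card_grow hadd
      have e1 : (grow nu r).cells.card = (grow nu r).card := rfl
      have e2 : lam.cells.card = lam.card := rfl
      omega
    · have := hs1 i; rw [rowLen_grow hadd i] at this; exact this
    · have := hs2 i; rw [rowLen_grow hadd (i+1)] at this; exact this
  · rintro ⟨h1, hsum, h3, h4⟩
    have hadd : Addable nu r := h1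
    refine ⟨hadd, ?_, ?_⟩
    · have hg := card_grow hadd
      have e1 : (grow nu r).cells.card = (grow nu r).card := rfl
      have e2 : lam.cells.card = lam.card := rfl
      omega
    · rw [IsHStrip_iff]
      exact ⟨fun i => by rw [rowLen_grow hadd i]; exact h3 i,
        fun i => by rw [rowLen_grow hadd (i+1)]; exact h4 i⟩

lemma remC_iff {lam nu : YoungDiagram} {k N r : ℕ}
    (hsA : lam.card = ∑ i ∈ Finset.range N, lam.rowLen i)
    (hsB : nu.card = ∑ i ∈ Finset.range N, nu.rowLen i) :
    (Removable lam r ∧ nu.cells.card = (shrink lam r).cells.card + k ∧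
        IsHStrip (shrink lam r) nu)
      ↔ RemC lam.rowLen nu.rowLen k N r := by
  constructor
  · rintro ⟨hrem, hcard, hstrip⟩
    obtain ⟨hs1, hs2⟩ := IsHStrip_iff.mp hstrip
    refine ⟨hrem, ?_, fun i => ?_, fun i => ?_⟩
    · have hg := card_shrink hrem
      have e1 : (shrink lam r).cells.card = (shrink lam r).card := rfl
      have e2 : nu.cells.card = nu.card := rfl
      omega
    · have := hs1 i; rw [rowLen_shrink hrem i] at this; exact this
    · have := hs2 i; rw [rowLen_shrink hrem i] at this; exact this
  · rintro ⟨h1, hsum, h3, h4⟩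
    have hrem : Removable lam r := h1
    refine ⟨hrem, ?_, ?_⟩
    · have hg := card_shrink hrem
      have e1 : (shrink lam r).cells.card = (shrink lam r).card := rfl
      have e2 : nu.cells.card = nu.card := rfl
      omega
    · rw [IsHStrip_iff]
      exact ⟨fun i => by rw [rowLen_shrink hrem i]; exact h3 i,
        fun i => by rw [rowLen_shrink hrem i]; exact h4 i⟩

lemma midC_iff {lam nu : YoungDiagram} {k N : ℕ} (hk : 1 ≤ k)
    (hsA : lam.card = ∑ i ∈ Finset.range N, lam.rowLen i)
    (hsB : nu.card = ∑ i ∈ Finset.range N, nu.rowLen i) :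
    (nu.cells.card = lam.cells.card + (k-1) ∧ IsHStrip lam nu)
      ↔ MidC lam.rowLen nu.rowLen k N := by
  have e1 : lam.cells.card = lam.card := rfl
  have e2 : nu.cells.card = nu.card := rfl
  constructor
  · rintro ⟨hcard, hstrip⟩
    obtain ⟨hs1, hs2⟩ := IsHStrip_iff.mp hstrip
    exact ⟨by omega, hs1, hs2⟩
  · rintro ⟨hsum, h2, h3⟩
    exact ⟨by omega, IsHStrip_iff.mpr ⟨h2, h3⟩⟩

section Main
variable {L : Type*} [CommRing L] [Algebra ℚ L] (s : Module.Basis YoungDiagram ℚ L)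
variable (nabla : Module.End ℚ L)

lemma leibniz_basis
    (hone : s (⊥ : YoungDiagram) = 1)
    (hPieri : ∀ (k : ℕ) (lam mu : YoungDiagram),
      s.repr (s (rowYD k) * s lam) mu =
        if mu.cells.card = lam.cells.card + k ∧ IsHStrip lam mu then 1 else 0)
    (hnabla : ∀ lam mu : YoungDiagram,
      s.repr (nabla (s lam)) mu = if Covers mu lam then (remContent mu lam : ℚ) else 0)
    (k : ℕ) (lam : YoungDiagram) :
    nabla (s (rowYD k) * s lam)
      = nabla (s (rowYD k)) * s lam + s (rowYD k) * nabla (s lam) := by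
  rcases Nat.eq_zero_or_pos k with rfl | hk
  · have h0 : nabla (1 : L) = 0 := by rw [← hone]; exact nabla_bot s nabla hnabla
    rw [rowYD_zero, hone, one_mul, h0, zero_mul, one_mul, zero_add]
  · apply s.repr.injective
    ext nu
    have hsA : lam.card = ∑ i ∈ Finset.range (lam.card + nu.card + k + 2), lam.rowLen i :=
      card_eq_sum (fun i hi => rowLen_zero_of_card_le (by omega))
    have hsB : nu.card = ∑ i ∈ Finset.range (lam.card + nu.card + k + 2), nu.rowLen i :=
      card_eq_sum (fun i hi => rowLen_zero_of_card_le (by omega))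
    rw [map_add, Finsupp.add_apply,
      repr_nabla s nabla hnabla _ nu (N := lam.card + nu.card + k + 2) (by omega),
      repr_mul_nabla s nabla hnabla hPieri k lam nu
        (N := lam.card + nu.card + k + 2) (by omega),
      nabla_rowYD s nabla hnabla hk, smul_mul_assoc, map_smul, Finsupp.smul_apply,
      smul_eq_mul, hPieri]
    simp only [hPieri]
    refine key lam.rowLen nu.rowLen k (lam.card + nu.card + k + 2)
      (fun i j hij => lam.rowLen_anti i j hij) (fun i j hij => nu.rowLen_anti i j hij)
      hk (by omega) (fun i hi => ⟨rowLen_zero_of_card_le (by omega),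
        rowLen_zero_of_card_le (by omega)⟩) _ _ _ ?_ ?_ ?_
    · intro r hr
      constructor
      · intro hA
        obtain ⟨hadd, hcard, hstrip⟩ := (addC_iff hsA hsB).mpr hA
        rw [if_pos hadd, if_pos ⟨hcard, hstrip⟩, one_mul]
      · intro hA
        by_cases hadd : Addable nu r
        · rw [if_pos hadd]
          have hcond : ¬((grow nu r).cells.card = lam.cells.card + k ∧
              IsHStrip lam (grow nu r)) :=
            fun hc => hA ((addC_iff hsA hsB).mp ⟨hadd, hc⟩)
          rw [if_neg hcond, zero_mul]
        · rw [if_neg hadd]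
    · intro r hr
      constructor
      · intro hA
        obtain ⟨hrem, hcard, hstrip⟩ := (remC_iff hsA hsB).mpr hA
        rw [if_pos hrem, if_pos ⟨hcard, hstrip⟩, mul_one]
      · intro hA
        by_cases hrem : Removable lam r
        · rw [if_pos hrem]
          have hcond : ¬(nu.cells.card = (shrink lam r).cells.card + k ∧
              IsHStrip (shrink lam r) nu) :=
            fun hc => hA ((remC_iff hsA hsB).mp ⟨hrem, hc⟩)
          rw [if_neg hcond, mul_zero]
        · rw [if_neg hrem]
    · constructor
      · intro hM
        rw [if_pos ((midC_iff hk hsA hsB).mpr hM), mul_one]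
      · intro hM
        rw [if_neg (fun hc => hM ((midC_iff hk hsA hsB).mp hc)), mul_zero]

end Main
end NablaAux
namespace NablaAux
open YoungDiagram Finset

/-- Remove the first row of a Young diagram. -/
def tail (lam : YoungDiagram) : YoungDiagram where
  cells := lam.cells.filter (fun c => c.2 < lam.rowLen (c.1 + 1))
  isLowerSet := by
    rintro ⟨i, j⟩ ⟨i', j'⟩ hqp hp
    obtain ⟨hi, hj⟩ : i' ≤ i ∧ j' ≤ j := Prod.mk_le_mk.mp hqp
    rw [Finset.mem_coe, Finset.mem_filter] at hp ⊢
    obtain ⟨hmem, hlt⟩ := hp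
    rw [YoungDiagram.mem_cells] at hmem
    refine ⟨(YoungDiagram.mem_cells _).mpr (lam.up_left_mem hi hj hmem), ?_⟩
    have := lam.rowLen_anti (i'+1) (i+1) (by omega)
    dsimp only at hlt ⊢
    omega

lemma rowLen_tail (lam : YoungDiagram) (i : ℕ) :
    (tail lam).rowLen i = lam.rowLen (i+1) := by
  apply rowLen_eq_of
  intro j
  show (i, j) ∈ (tail lam).cells ↔ _
  unfold tail
  rw [Finset.mem_filter, YoungDiagram.mem_cells, mem_iff_lt_rowLen]
  dsimp only
  have := lam.rowLen_anti i (i+1) (by omega)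
  omega

lemma rowLen_zero_le_card (mu : YoungDiagram) : mu.rowLen 0 ≤ mu.card := by
  have h := card_eq_sum (mu := mu) (N := mu.card + 1)
    (fun i hi => rowLen_zero_of_card_le (by omega))
  have : mu.rowLen 0 ≤ ∑ i ∈ Finset.range (mu.card + 1), mu.rowLen i :=
    Finset.single_le_sum (fun i _ => Nat.zero_le _) (Finset.mem_range.mpr (by omega))
  omega

lemma card_tail (lam : YoungDiagram) : lam.card = (tail lam).card + lam.rowLen 0 := by
  have h1 : lam.card = ∑ i ∈ Finset.range (lam.card + 1), lam.rowLen i :=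
    card_eq_sum (fun i hi => rowLen_zero_of_card_le (by omega))
  have h2 : (tail lam).card = ∑ i ∈ Finset.range lam.card, (tail lam).rowLen i :=
    card_eq_sum (fun i hi => by
      rw [rowLen_tail]
      exact rowLen_zero_of_card_le (by omega))
  have h3 : ∑ i ∈ Finset.range lam.card, (tail lam).rowLen i
      = ∑ i ∈ Finset.range lam.card, lam.rowLen (i+1) :=
    Finset.sum_congr rfl (fun i _ => rowLen_tail lam i)
  have h4 : (∑ i ∈ Finset.range lam.card, lam.rowLen (i+1)) + lam.rowLen 0
      = ∑ i ∈ Finset.range (lam.card + 1), lam.rowLen i :=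
    (Finset.sum_range_succ' _ _).symm
  omega

lemma hstrip_tail (lam : YoungDiagram) : IsHStrip (tail lam) lam := by
  rw [IsHStrip_iff]
  constructor
  · intro i
    rw [rowLen_tail]
    exact lam.rowLen_anti i (i+1) (by omega)
  · intro i
    rw [rowLen_tail]

lemma eq_of_rowLen_le_of_card_eq {mu lam : YoungDiagram}
    (hle : ∀ i, mu.rowLen i ≤ lam.rowLen i) (hcard : mu.card = lam.card) : mu = lam := by
  have h1 : mu.card = ∑ i ∈ Finset.range (lam.card + mu.card + 1), mu.rowLen i :=
    card_eq_sum (fun i hi => rowLen_zero_of_card_le (by omega))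
  have h2 : lam.card = ∑ i ∈ Finset.range (lam.card + mu.card + 1), lam.rowLen i :=
    card_eq_sum (fun i hi => rowLen_zero_of_card_le (by omega))
  have hall : ∀ i ∈ Finset.range (lam.card + mu.card + 1), mu.rowLen i = lam.rowLen i := by
    by_contra hc
    push_neg at hc
    obtain ⟨i0, hi0, hne⟩ := hc
    have : ∑ i ∈ Finset.range (lam.card + mu.card + 1), mu.rowLen i
        < ∑ i ∈ Finset.range (lam.card + mu.card + 1), lam.rowLen i :=
      Finset.sum_lt_sum (fun i _ => hle i) ⟨i0, hi0, by have := hle i0; omega⟩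
    omega
  refine ext_rowLen (fun i => ?_)
  rcases Nat.lt_or_ge i (lam.card + mu.card + 1) with h | h
  · exact hall i (Finset.mem_range.mpr h)
  · rw [rowLen_zero_of_card_le (show mu.card ≤ i by omega),
      rowLen_zero_of_card_le (show lam.card ≤ i by omega)]

lemma measure_lt {lam mu : YoungDiagram} (hk : 1 ≤ lam.rowLen 0)
    (hcard : mu.cells.card = (tail lam).cells.card + lam.rowLen 0)
    (hstrip : IsHStrip (tail lam) mu) (hne : mu ≠ lam) :
    2 * mu.card - mu.rowLen 0 < 2 * lam.card - lam.rowLen 0 := by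
  have e1 : mu.cells.card = mu.card := rfl
  have e2 : (tail lam).cells.card = (tail lam).card := rfl
  have hct := card_tail lam
  have hmc : mu.card = lam.card := by omega
  have hrow : lam.rowLen 0 < mu.rowLen 0 := by
    by_contra hc
    push_neg at hc
    have hle : ∀ i, mu.rowLen i ≤ lam.rowLen i := by
      intro i
      rcases Nat.eq_zero_or_pos i with rfl | hi
      · exact hc
      · have h := (IsHStrip_iff.mp hstrip).2 (i-1)
        rw [rowLen_tail] at h
        have he : i - 1 + 1 = i := by omega
        rw [he] at h
        exact h
    exact hne (eq_of_rowLen_le_of_card_eq hle hmc)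
  have := rowLen_zero_le_card mu
  have := rowLen_zero_le_card lam
  omega

lemma tail_measure_lt {lam : YoungDiagram} (hk : 1 ≤ lam.rowLen 0) :
    2 * (tail lam).card - (tail lam).rowLen 0 < 2 * lam.card - lam.rowLen 0 := by
  have hct := card_tail lam
  have h1 := rowLen_zero_le_card (tail lam)
  have h2 := rowLen_zero_le_card lam
  omega

lemma eq_bot_of_rowLen_zero {lam : YoungDiagram} (h : lam.rowLen 0 = 0) : lam = ⊥ :=
  ext_rowLen (fun i => by
    rw [bot_rowLen]
    have := lam.rowLen_anti 0 i (by omega)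
    omega)

end NablaAux
open NablaAux in
/-- The operator `∇` (content-weighted single box removal on the Schur basis) on the
ring of symmetric functions satisfies the Leibniz rule. -/
theorem nabla_leibniz
    {L : Type*} [CommRing L] [Algebra ℚ L]
    (s : Module.Basis YoungDiagram ℚ L)
    (hone : s (⊥ : YoungDiagram) = 1)
    (hPieri : ∀ (k : ℕ) (lam mu : YoungDiagram),
      s.repr (s (rowYD k) * s lam) mu =
        if mu.cells.card = lam.cells.card + k ∧ IsHStrip lam mu then 1 else 0)
    (xi : Module.End ℚ L)
    (hxi : ∀ lam mu : YoungDiagram,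
      s.repr (xi (s lam)) mu = if Covers mu lam then 1 else 0)
    (nabla : Module.End ℚ L)
    (hnabla : ∀ lam mu : YoungDiagram,
      s.repr (nabla (s lam)) mu =
        if Covers mu lam then (remContent mu lam : ℚ) else 0)
    : ∀ f g : L, nabla (f * g) = nabla f * g + f * nabla g := by
  intro f g
  have hone' : nabla (1 : L) = 0 := by
    rw [← hone]; exact nabla_bot s nabla hnabla
  let A : Submodule ℚ L :=
    { carrier := {x | ∀ y, nabla (x * y) = nabla x * y + x * nabla y}
      add_mem' := by
        intro a b ha hb y
        simp only [Set.mem_setOf_eq] at ha hb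
        simp only [add_mul, map_add]
        rw [ha y, hb y]
        ring
      zero_mem' := by
        intro y
        simp
      smul_mem' := by
        intro c x hx y
        simp only [Set.mem_setOf_eq] at hx
        simp only [smul_mul_assoc, map_smul]
        rw [hx y, smul_add] }
  have hAmem : ∀ x : L, x ∈ A ↔ ∀ y, nabla (x * y) = nabla x * y + x * nabla y :=
    fun x => Iff.rfl
  have hmul : ∀ x y : L, x ∈ A → y ∈ A → x * y ∈ A := by
    intro x y hx hy
    rw [hAmem] at hx hy ⊢
    intro z
    have h1 : nabla (x * y) = nabla x * y + x * nabla y := hx y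
    rw [mul_assoc, hx (y * z), hy z, h1]
    ring
  have hgen : ∀ k : ℕ, s (rowYD k) ∈ A := by
    intro k
    let B : Submodule ℚ L :=
      { carrier := {y | nabla (s (rowYD k) * y)
          = nabla (s (rowYD k)) * y + s (rowYD k) * nabla y}
        add_mem' := by
          intro a b ha hb
          simp only [Set.mem_setOf_eq] at ha hb ⊢
          simp only [mul_add, map_add]
          rw [ha, hb]
          ring
        zero_mem' := by simp
        smul_mem' := by
          intro c x hx
          simp only [Set.mem_setOf_eq] at hx ⊢
          simp only [mul_smul_comm, map_smul]
          rw [hx, smul_add] }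
    have hBall : ∀ y : L, y ∈ B := by
      intro y
      have hr : Set.range ⇑s ⊆ (B : Set L) := by
        rintro _ ⟨lam, rfl⟩
        exact leibniz_basis s nabla hone hPieri hnabla k lam
      have hy : y ∈ Submodule.span ℚ (Set.range ⇑s) := by rw [s.span_eq]; trivial
      exact Submodule.span_le.mpr hr hy
    rw [hAmem]
    intro y
    exact hBall y
  have hbasis : ∀ (n : ℕ) (lam : YoungDiagram),
      2 * lam.card - lam.rowLen 0 = n → s lam ∈ A := by
    intro n
    induction n using Nat.strong_induction_on with
    | _ n IH =>
      intro lam hn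
      by_cases hk0 : lam.rowLen 0 = 0
      · rw [eq_bot_of_rowLen_zero hk0, hone, hAmem]
        intro y
        rw [one_mul, hone', zero_mul, one_mul, zero_add]
      · have hk : 1 ≤ lam.rowLen 0 := by omega
        have htail : s (tail lam) ∈ A :=
          IH _ (hn ▸ tail_measure_lt hk) (tail lam) rfl
        have hx : s (rowYD (lam.rowLen 0)) * s (tail lam) ∈ A :=
          hmul _ _ (hgen (lam.rowLen 0)) htail
        have hreprlam : s.repr (s (rowYD (lam.rowLen 0)) * s (tail lam)) lam = 1 := by
          rw [hPieri]
          refine if_pos ⟨?_, hstrip_tail lam⟩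
          have e1 : lam.cells.card = lam.card := rfl
          have e2 : (tail lam).cells.card = (tail lam).card := rfl
          have := card_tail lam
          omega
        have hsupp : lam ∈ (s.repr (s (rowYD (lam.rowLen 0)) * s (tail lam))).support :=
          Finsupp.mem_support_iff.mpr (by rw [hreprlam]; norm_num)
        have hdecomp : s lam = (s (rowYD (lam.rowLen 0)) * s (tail lam))
            - ∑ mu ∈ ((s.repr (s (rowYD (lam.rowLen 0)) * s (tail lam))).support.erase lam),
                s.repr (s (rowYD (lam.rowLen 0)) * s (tail lam)) mu • s mu := by
          have h1 := s.linearCombination_repr (s (rowYD (lam.rowLen 0)) * s (tail lam))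
          rw [Finsupp.linearCombination_apply, Finsupp.sum,
            ← Finset.add_sum_erase _ _ hsupp, hreprlam, one_smul] at h1
          exact eq_sub_of_add_eq h1
        rw [hdecomp]
        refine Submodule.sub_mem A hx (Submodule.sum_mem A ?_)
        intro mu hmu
        refine Submodule.smul_mem A _ ?_
        have hmu' := Finset.mem_of_mem_erase hmu
        have hne : mu ≠ lam := Finset.ne_of_mem_erase hmu
        have hcond : mu.cells.card = (tail lam).cells.card + lam.rowLen 0 ∧
            IsHStrip (tail lam) mu := by
          have hnz := Finsupp.mem_support_iff.mp hmu'
          rw [hPieri] at hnz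
          by_contra hc
          rw [if_neg hc] at hnz
          exact hnz rfl
        exact IH _ (hn ▸ measure_lt hk hcond.1 hcond.2 hne) mu rfl
  have hall : ∀ x : L, x ∈ A := by
    intro x
    have hr : Set.range ⇑s ⊆ (A : Set L) := by
      rintro _ ⟨lam, rfl⟩
      exact hbasis _ lam rfl
    have hx : x ∈ Submodule.span ℚ (Set.range ⇑s) := by rw [s.span_eq]; trivial
    exact Submodule.span_le.mpr hr hx
  exact (hAmem f).mp (hall f) g
end

section
/- Reduced-word identity for Schubert structure constants: for any two permutations u, v (of Z, fixing all but finitely many elements), binomial(ℓ(u)+ℓ(v), ℓ(v)) · |R(u)| · |R(v)| = Σ_w c^w_{u,v} · |R(w)|, where ℓ denotes Coxeter length, R(w) the set of reduced words of w, and c^w_{u,v} the structure constants of Schubert polynomials. -/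
/-- The simple transposition `s_i = (i, i+1)` of `ℤ`. -/
def simpleRefl (i : ℤ) : Equiv.Perm ℤ := Equiv.swap i (i + 1)

/-- The Coxeter length of a permutation of `ℤ`: its number of inversions. -/
noncomputable def lenZ (w : Equiv.Perm ℤ) : ℕ :=
  Nat.card {p : ℤ × ℤ // p.1 < p.2 ∧ w p.2 < w p.1}

def InvSet (w : Equiv.Perm ℤ) : Set (ℤ × ℤ) := {p : ℤ × ℤ | p.1 < p.2 ∧ w p.2 < w p.1}

lemma lenZ_eq_ncard (w : Equiv.Perm ℤ) : lenZ w = (InvSet w).ncard := by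
  rw [← Nat.card_coe_set_eq]
  rfl

lemma invSet_finite {w : Equiv.Perm ℤ} (hw : {i : ℤ | w i ≠ i}.Finite) :
    (InvSet w).Finite := by
  rcases Set.Finite.bddBelow hw with ⟨m, hm⟩
  rcases Set.Finite.bddAbove hw with ⟨M, hM⟩
  have hfix : ∀ x : ℤ, x < m ∨ M < x → w x = x := by
    intro x hx
    by_contra h
    rcases hx with hx | hx
    · exact absurd (hm h) (by omega)
    · exact absurd (hM h) (by omega)
  apply Set.Finite.subset (Set.finite_Icc (m, m) (M, M))
  rintro ⟨a, b⟩ ⟨hab, hinv⟩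
  simp only [Set.mem_Icc, Prod.mk_le_mk] at *
  have hbM : b ≤ M := by
    by_contra h
    push_neg at h
    have hb : w b = b := hfix b (Or.inr h)
    have haM : M < w a := by omega
    have : w (w a) = w a := hfix _ (Or.inr haM)
    have := w.injective this
    omega
  have ham : m ≤ a := by
    by_contra h
    push_neg at h
    have ha : w a = a := hfix a (Or.inl h)
    have : w b < m := by omega
    have : w (w b) = w b := hfix _ (Or.inl this)
    have := w.injective this
    omega
  omega

lemma swap_lt_iff (j s t : ℤ) :
    Equiv.swap j (j+1) t < Equiv.swap j (j+1) s ↔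
      ((t < s ∧ ¬(s = j+1 ∧ t = j)) ∨ (s = j ∧ t = j+1)) := by
  simp only [Equiv.swap_apply_def]
  split_ifs <;> omega

lemma supp_swap_mul {w : Equiv.Perm ℤ} (hw : {i : ℤ | w i ≠ i}.Finite) (j : ℤ) :
    {i : ℤ | (simpleRefl j * w) i ≠ i}.Finite := by
  apply Set.Finite.subset (hw.union ((Set.finite_singleton (w⁻¹ (j+1))).insert (w⁻¹ j)))
  intro x hx
  simp only [Set.mem_setOf_eq, Equiv.Perm.mul_apply] at hx
  by_contra hcon
  simp only [Set.mem_union, Set.mem_setOf_eq, Set.mem_insert_iff, Set.mem_singleton_iff,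
    not_or, not_not] at hcon
  obtain ⟨h1, h2, h3⟩ := hcon
  have hj : w x ≠ j := fun hh => h2 (w.injective (by simp [hh]))
  have hj' : w x ≠ j + 1 := fun hh => h3 (w.injective (by simp [hh]))
  rw [h1] at hx hj hj'
  exact hx (by simp [simpleRefl, Equiv.swap_apply_of_ne_of_ne hj hj'])

lemma lenZ_swap_mul_of_lt {w : Equiv.Perm ℤ} (hw : {i : ℤ | w i ≠ i}.Finite) {j : ℤ}
    (h : w⁻¹ j < w⁻¹ (j+1)) :
    lenZ (simpleRefl j * w) = lenZ w + 1 := by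
  have hset : InvSet (simpleRefl j * w) = insert (w⁻¹ j, w⁻¹ (j+1)) (InvSet w) := by
    ext ⟨x, y⟩
    simp only [InvSet, Set.mem_setOf_eq, Set.mem_insert_iff, Prod.mk.injEq,
      Equiv.Perm.mul_apply, simpleRefl]
    rw [swap_lt_iff]
    constructor
    · rintro ⟨hxy, (⟨hlt, -⟩ | ⟨hs, ht⟩)⟩
      · exact Or.inr ⟨hxy, hlt⟩
      · left
        constructor
        · exact w.injective (by simp [hs])
        · exact w.injective (by simp [ht])
    · rintro (⟨rfl, rfl⟩ | ⟨hxy, hlt⟩)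
      · exact ⟨h, Or.inr ⟨by simp, by simp⟩⟩
      · refine ⟨hxy, Or.inl ⟨hlt, ?_⟩⟩
        rintro ⟨hs, ht⟩
        have hx : x = w⁻¹ (j+1) := w.injective (by simp [hs])
        have hy : y = w⁻¹ j := w.injective (by simp [ht])
        omega
  have hnot : (w⁻¹ j, w⁻¹ (j+1)) ∉ InvSet w := by
    simp only [InvSet, Set.mem_setOf_eq]
    intro hh
    simp only [show ∀ x, w (w⁻¹ x) = x from fun x => w.apply_symm_apply x] at hh
    omega
  rw [lenZ_eq_ncard, lenZ_eq_ncard, hset,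
    Set.ncard_insert_of_notMem hnot (invSet_finite hw)]

lemma lenZ_swap_mul_of_gt {w : Equiv.Perm ℤ} (hw : {i : ℤ | w i ≠ i}.Finite) {j : ℤ}
    (h : w⁻¹ (j+1) < w⁻¹ j) :
    lenZ (simpleRefl j * w) + 1 = lenZ w := by
  have hsr : simpleRefl j * simpleRefl j = 1 := by
    simp [simpleRefl, Equiv.swap_mul_self]
  have hw' := supp_swap_mul hw j
  have h' : (simpleRefl j * w)⁻¹ j < (simpleRefl j * w)⁻¹ (j+1) := by
    have e1 : (simpleRefl j * w)⁻¹ j = w⁻¹ (j+1) := by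
      simp [simpleRefl, mul_inv_rev]
    have e2 : (simpleRefl j * w)⁻¹ (j+1) = w⁻¹ j := by
      simp [simpleRefl, mul_inv_rev]
    rw [e1, e2]; exact h
  have h2 := lenZ_swap_mul_of_lt hw' h'
  rw [← mul_assoc, hsr, one_mul] at h2
  omega

lemma lenZ_swap_mul_le {w : Equiv.Perm ℤ} (hw : {i : ℤ | w i ≠ i}.Finite) (j : ℤ) :
    lenZ (simpleRefl j * w) ≤ lenZ w + 1 ∧ lenZ w ≤ lenZ (simpleRefl j * w) + 1 := by
  rcases lt_trichotomy (w⁻¹ j) (w⁻¹ (j+1)) with h | h | h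
  · have := lenZ_swap_mul_of_lt hw h; omega
  · exfalso; have := w⁻¹.injective h; omega
  · have := lenZ_swap_mul_of_gt hw h; omega

lemma supp_word_finite (l : List ℤ) : {i : ℤ | (l.map simpleRefl).prod i ≠ i}.Finite := by
  induction l with
  | nil => simp
  | cons j t ih =>
    rw [List.map_cons, List.prod_cons]
    exact supp_swap_mul ih j

lemma lenZ_le_length (l : List ℤ) : lenZ (l.map simpleRefl).prod ≤ l.length := by
  induction l with
  | nil =>
    have : InvSet (1 : Equiv.Perm ℤ) = ∅ := by
      ext ⟨x, y⟩; simp only [InvSet, Set.mem_setOf_eq, Equiv.Perm.one_apply]; simp; omega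
    simp [lenZ_eq_ncard, this]
  | cons j t ih =>
    rw [List.map_cons, List.prod_cons]
    have := (lenZ_swap_mul_le (supp_word_finite t) j).1
    simpa using le_trans this (by omega)

/-- `l` is a reduced word for `w`: a product expression of `w` by simple
transpositions of minimal length. -/
def IsReducedWord (w : Equiv.Perm ℤ) (l : List ℤ) : Prop :=
  (l.map simpleRefl).prod = w ∧ l.length = lenZ w

lemma letters_ge (B : ℤ) : ∀ (l : List ℤ) (w : Equiv.Perm ℤ),
    (∀ x, x < B → w x = x) → IsReducedWord w l → ∀ j ∈ l, B ≤ j := by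
  intro l
  induction l with
  | nil => intro w _ _ j hj; simp at hj
  | cons j t ih =>
    intro w hfix hred k hk
    have hwfin : {i : ℤ | w i ≠ i}.Finite := hred.1 ▸ supp_word_finite (j :: t)
    obtain ⟨hprod, hlen⟩ := hred
    rw [List.map_cons, List.prod_cons] at hprod
    set w' := (t.map simpleRefl).prod with hw'
    have hw'fin : {i : ℤ | w' i ≠ i}.Finite := supp_word_finite t
    have hfixinv : ∀ x, x < B → w⁻¹ x = x := by
      intro x hx
      have := hfix x hx
      exact w.injective (by simp [this])
    -- first: B ≤ j
    have hBj : B ≤ j := by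
      by_contra hc
      push_neg at hc
      have h1 : w⁻¹ j = j := hfixinv j hc
      have h2 : j < w⁻¹ (j+1) := by
        rcases lt_or_ge (w⁻¹ (j+1)) B with hy | hy
        · have h6 : w (w⁻¹ (j+1)) = w⁻¹ (j+1) := hfix _ hy
          rw [show w (w⁻¹ (j+1)) = j+1 from w.apply_symm_apply _] at h6
          omega
        · omega
      have h3 : lenZ (simpleRefl j * w) = lenZ w + 1 := lenZ_swap_mul_of_lt hwfin (by omega)
      have h4 : simpleRefl j * w = w' := by
        rw [← hprod, ← mul_assoc]
        simp [simpleRefl, Equiv.swap_mul_self]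
      rw [h4] at h3
      have h5 : lenZ w' ≤ t.length := lenZ_le_length t
      simp only [List.length_cons] at hlen
      omega
    rw [List.mem_cons] at hk
    rcases hk with hk | hk
    · omega
    · -- k ∈ t : use induction
      have h4 : simpleRefl j * w = w' := by
        rw [← hprod, ← mul_assoc]
        simp [simpleRefl, Equiv.swap_mul_self]
      have hub : lenZ w ≤ lenZ w' + 1 := by
        have := (lenZ_swap_mul_le hwfin j).2
        rw [h4] at this; exact this
      have h5 : lenZ w' ≤ t.length := lenZ_le_length t
      simp only [List.length_cons] at hlen
      have hred' : IsReducedWord w' t := ⟨rfl, by omega⟩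
      have hfix' : ∀ x, x < B → w' x = x := by
        intro x hx
        rw [← h4]
        simp only [Equiv.Perm.mul_apply, hfix x hx, simpleRefl]
        exact Equiv.swap_apply_of_ne_of_ne (by omega) (by omega)
      exact ih w' hfix' hred' k hk

/-- The number of reduced words of `w`. -/
noncomputable def numRed (w : Equiv.Perm ℤ) : ℕ :=
  Nat.card {l : List ℤ // IsReducedWord w l}

/-- `alpha` is a compatible sequence for the word `h`: weakly increasing, bounded
termwise by `h`, and strictly increasing at ascents of `h`. -/
def CompatibleSeq (h alpha : List ℤ) : Prop :=
  alpha.length = h.length ∧ alpha.Chain' (· ≤ ·) ∧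
  (∀ i : ℕ, i < h.length → alpha.getD i 0 ≤ h.getD i 0) ∧
  (∀ i : ℕ, i + 1 < h.length → h.getD i 0 < h.getD (i + 1) 0 →
    alpha.getD i 0 < alpha.getD (i + 1) 0)

/-- The back stable Schubert polynomial of `w`, as a formal power series in the
variables `x_i, i ∈ ℤ`: the coefficient of a monomial is the number of pairs of a
reduced word of `w` together with a compatible sequence having that content. -/
noncomputable def backStableSchubert (w : Equiv.Perm ℤ) : MvPowerSeries ℤ ℚ :=
  fun d => (Nat.card {p : List ℤ × List ℤ //
    IsReducedWord w p.1 ∧ CompatibleSeq p.1 p.2 ∧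
      Multiset.toFinsupp (↑p.2 : Multiset ℤ) = d} : ℚ)

lemma toFinsupp_coe_eq {l₁ l₂ : List ℤ}
    (h : Multiset.toFinsupp (↑l₁ : Multiset ℤ) = Multiset.toFinsupp (↑l₂ : Multiset ℤ)) :
    l₁.Perm l₂ := by
  rwa [EmbeddingLike.apply_eq_iff_eq, Multiset.coe_eq_coe] at h

lemma compat_of (w : Equiv.Perm ℤ) (B : ℤ) (hfix : ∀ x, x < B → w x = x)
    (β : List ℤ) (hβ : β.Pairwise (· < ·)) (hβB : ∀ x ∈ β, x < B)
    (l : List ℤ) (h1 : IsReducedWord w l) (hlen : β.length = lenZ w) :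
    CompatibleSeq l β := by
  have hsortβ : β.Pairwise (· ≤ ·) := hβ.imp (fun {a b} h => le_of_lt h)
  have hlenl : l.length = lenZ w := h1.2
  have hlet : ∀ j ∈ l, B ≤ j := letters_ge B l w hfix h1
  refine ⟨by omega, List.isChain_iff_pairwise.2 hsortβ, ?_, ?_⟩
  · intro i hi
    have hiβ : i < β.length := by omega
    rw [List.getD_eq_getElem _ _ hiβ, List.getD_eq_getElem _ _ (by omega : i < l.length)]
    have h1' : β[i] < B := hβB _ (List.getElem_mem _)
    have h2' : B ≤ l[i] := hlet _ (List.getElem_mem _)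
    omega
  · intro i hi _
    have ha : i < β.length := by omega
    have hb : i + 1 < β.length := by omega
    rw [List.getD_eq_getElem _ _ ha, List.getD_eq_getElem _ _ hb]
    exact List.pairwise_iff_getElem.1 hβ i (i+1) ha hb (by omega)

lemma coeff_single (w : Equiv.Perm ℤ) (B : ℤ)
    (hfix : ∀ x, x < B → w x = x)
    (β : List ℤ) (hβ : β.Pairwise (· < ·)) (hβB : ∀ x ∈ β, x < B) :
    backStableSchubert w (Multiset.toFinsupp (↑β : Multiset ℤ)) =
      if β.length = lenZ w then (numRed w : ℚ) else 0 := by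
  have hsortβ : β.Pairwise (· ≤ ·) := hβ.imp (fun {a b} h => le_of_lt h)
  unfold backStableSchubert
  split_ifs with hcase
  · norm_cast
    apply Nat.card_congr
    have key : ∀ p : List ℤ × List ℤ, (IsReducedWord w p.1 ∧ CompatibleSeq p.1 p.2 ∧
        Multiset.toFinsupp (↑p.2 : Multiset ℤ) = Multiset.toFinsupp (↑β : Multiset ℤ)) ↔
        (IsReducedWord w p.1 ∧ p.2 = β) := by
      rintro ⟨l, α⟩
      constructor
      · rintro ⟨h1, h2, h3⟩
        exact ⟨h1, (toFinsupp_coe_eq h3).eq_of_pairwise'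
          (List.isChain_iff_pairwise.1 h2.2.1) hsortβ⟩
      · rintro ⟨h1, h2⟩
        refine ⟨h1, ?_, by rw [h2]⟩
        have := compat_of w B hfix β hβ hβB l h1 hcase
        rw [h2]
        exact this
    refine (Equiv.subtypeEquivRight key).trans ?_
    exact { toFun := fun p => ⟨p.1.1, p.2.1⟩
            invFun := fun l => ⟨(l.1, β), l.2, rfl⟩
            left_inv := by rintro ⟨⟨l, α⟩, hl, rfl⟩; rfl
            right_inv := fun l => rfl }
  · rw [Nat.cast_eq_zero]
    rw [Nat.card_eq_zero]
    left
    constructor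
    rintro ⟨⟨l, α⟩, h1, h2, h3⟩
    have e1 : α.length = β.length := (toFinsupp_coe_eq h3).length_eq
    have e2 : α.length = l.length := h2.1
    have e3 : l.length = lenZ w := h1.2
    omega

lemma indicator_apply (t : Finset ℤ) (a : ℤ) :
    Multiset.toFinsupp t.val a = if a ∈ t then 1 else 0 := by
  rw [Multiset.toFinsupp_apply]
  split_ifs with h
  · exact Multiset.count_eq_one_of_mem t.nodup h
  · exact Multiset.count_eq_zero_of_notMem h

lemma indicator_support (t : Finset ℤ) : (Multiset.toFinsupp t.val).support = t := by
  rw [Multiset.toFinsupp_support, Finset.val_toFinset]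

lemma indicator_recover {e : ℤ →₀ ℕ} (he : ∀ a, e a ≤ 1) :
    Multiset.toFinsupp e.support.val = e := by
  ext a
  rw [indicator_apply]
  have h1 := he a
  by_cases h : a ∈ e.support
  · have h2 := Finsupp.mem_support_iff.1 h
    simp only [h, if_true]
    omega
  · have h2 := Finsupp.notMem_support_iff.1 h
    simp only [h, if_false]
    omega

lemma coeff_one (B : ℤ) (e : ℤ →₀ ℕ) (he : ∀ a, e a ≤ 1) (heB : ∀ a ∈ e.support, a < B)
    (w : Equiv.Perm ℤ) (hwfix : ∀ x, x < B → w x = x) :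
    MvPowerSeries.coeff e (backStableSchubert w) =
      if e.support.card = lenZ w then (numRed w : ℚ) else 0 := by
  have hrec : Multiset.toFinsupp (↑(e.support.sort (· ≤ ·)) : Multiset ℤ) = e := by
    rw [Finset.sort_eq]; exact indicator_recover he
  calc MvPowerSeries.coeff e (backStableSchubert w)
      = backStableSchubert w (Multiset.toFinsupp (↑(e.support.sort (· ≤ ·)) : Multiset ℤ)) := by
        rw [hrec]; rfl
    _ = if (e.support.sort (· ≤ ·)).length = lenZ w then (numRed w : ℚ) else 0 :=
        coeff_single w B hwfix _ (Finset.sortedLT_sort _).pairwise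
          (fun x hx => heB x ((Finset.mem_sort _).1 hx))
    _ = _ := by rw [Finset.length_sort]

lemma step1 (u v : Equiv.Perm ℤ) (c : Equiv.Perm ℤ →₀ ℕ) (B : ℤ)
    (hufix : ∀ x, x < B → u x = x) (hvfix : ∀ x, x < B → v x = x)
    (hcfix : ∀ w ∈ c.support, ∀ x, x < B → w x = x)
    (hc : backStableSchubert u * backStableSchubert v =
      c.sum fun w a => (a : ℚ) • backStableSchubert w)
    (S : Finset ℤ) (hS : ∀ x ∈ S, x < B) :
    (if S.card = lenZ u + lenZ v
      then (((lenZ u + lenZ v).choose (lenZ u) : ℚ) * numRed u * numRed v) else 0) =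
      ∑ w ∈ c.support, (c w : ℚ) * (if S.card = lenZ w then (numRed w : ℚ) else 0) := by
  classical
  set d : ℤ →₀ ℕ := Multiset.toFinsupp S.val with hd
  have hdapp : ∀ a, d a = if a ∈ S then 1 else 0 := fun a => indicator_apply S a
  have hcoeff := congrArg (MvPowerSeries.coeff d) hc
  rw [Finsupp.sum, map_sum] at hcoeff
  -- right side
  have hRHS : ∀ w ∈ c.support,
      (MvPowerSeries.coeff d) ((c w : ℚ) • backStableSchubert w) =
      (c w : ℚ) * (if S.card = lenZ w then (numRed w : ℚ) else 0) := by
    intro w hw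
    rw [map_smul, smul_eq_mul]
    congr 1
    have hle : ∀ a, d a ≤ 1 := by intro a; rw [hdapp]; split_ifs <;> omega
    have hsupp : d.support = S := indicator_support S
    rw [coeff_one B d hle (fun a ha => hS a (hsupp ▸ ha)) w (hcfix w hw), hsupp]
  rw [Finset.sum_congr rfl hRHS] at hcoeff
  -- left side
  rw [MvPowerSeries.coeff_mul] at hcoeff
  have hterm : ∀ p ∈ Finset.HasAntidiagonal.antidiagonal d,
      MvPowerSeries.coeff p.1 (backStableSchubert u) *
        MvPowerSeries.coeff p.2 (backStableSchubert v) =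
      (if p.1.support.card = lenZ u then (numRed u : ℚ) else 0) *
        (if (S \ p.1.support).card = lenZ v then (numRed v : ℚ) else 0) := by
    rintro ⟨e, f⟩ hp
    rw [Finset.HasAntidiagonal.mem_antidiagonal] at hp
    have happ : ∀ a, e a + f a = d a := by
      intro a
      rw [← hp]; rfl
    have he1 : ∀ a, e a ≤ 1 := by
      intro a
      have h1 := happ a
      have h2 : d a ≤ 1 := by rw [hdapp]; split_ifs <;> omega
      omega
    have hf1 : ∀ a, f a ≤ 1 := by
      intro a
      have h1 := happ a
      have h2 : d a ≤ 1 := by rw [hdapp]; split_ifs <;> omega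
      omega
    have hesupp : ∀ a ∈ e.support, a ∈ S := by
      intro a ha
      have h1 := Finsupp.mem_support_iff.1 ha
      have h2 := happ a
      have h3 := hdapp a
      by_contra hcon
      rw [if_neg hcon] at h3
      omega
    have hfsupp : f.support = S \ e.support := by
      ext a
      have h1 := happ a
      have h2 := hdapp a
      have h3 := he1 a
      simp only [Finsupp.mem_support_iff, Finset.mem_sdiff, Finsupp.mem_support_iff]
      by_cases hms : a ∈ S
      · rw [if_pos hms] at h2
        constructor
        · intro h; exact ⟨hms, by omega⟩
        · intro h; have := h.2; omega
      · rw [if_neg hms] at h2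
        constructor
        · intro h; omega
        · intro h; exact absurd h.1 hms
    have hfs : ∀ a ∈ f.support, a < B := by
      intro a ha
      rw [hfsupp, Finset.mem_sdiff] at ha
      exact hS a ha.1
    rw [coeff_one B e he1 (fun a ha => hS a (hesupp a ha)) u hufix,
      coeff_one B f hf1 hfs v hvfix, hfsupp]
  rw [Finset.sum_congr rfl hterm] at hcoeff
  -- reindex the antidiagonal sum to the powerset
  have hbij : ∑ p ∈ Finset.HasAntidiagonal.antidiagonal d,
      ((if p.1.support.card = lenZ u then (numRed u : ℚ) else 0) *
        (if (S \ p.1.support).card = lenZ v then (numRed v : ℚ) else 0)) =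
      ∑ T ∈ S.powerset,
      ((if T.card = lenZ u then (numRed u : ℚ) else 0) *
        (if (S \ T).card = lenZ v then (numRed v : ℚ) else 0)) := by
    refine Finset.sum_nbij' (fun p => p.1.support)
      (fun T => (Multiset.toFinsupp T.val, Multiset.toFinsupp (S \ T).val)) ?_ ?_ ?_ ?_ ?_
    · rintro ⟨e, f⟩ hp
      rw [Finset.HasAntidiagonal.mem_antidiagonal] at hp
      rw [Finset.mem_powerset]
      intro a ha
      have h1 : e a ≠ 0 := Finsupp.mem_support_iff.1 ha
      have h2 := hdapp a
      have h3 : e a + f a = d a := by rw [← hp]; rfl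
      by_contra hcon
      rw [if_neg hcon] at h2
      omega
    · intro T hT
      rw [Finset.mem_powerset] at hT
      rw [Finset.HasAntidiagonal.mem_antidiagonal]
      ext a
      simp only [Finsupp.add_apply]
      rw [indicator_apply, indicator_apply, hdapp]
      have hsd : a ∈ S \ T ↔ (a ∈ S ∧ a ∉ T) := Finset.mem_sdiff
      by_cases h1 : a ∈ T <;> by_cases h2 : a ∈ S
      · simp [h1, h2, hsd]
      · exact absurd (hT h1) h2
      · simp [h1, h2, hsd]
      · simp [h1, h2, hsd]
    · rintro ⟨e, f⟩ hp
      rw [Finset.HasAntidiagonal.mem_antidiagonal] at hp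
      have happ : ∀ a, e a + f a = d a := by intro a; rw [← hp]; rfl
      have he1 : ∀ a, e a ≤ 1 := by
        intro a
        have h1 := happ a
        have h2 : d a ≤ 1 := by rw [hdapp]; split_ifs <;> omega
        omega
      have hf : f = Multiset.toFinsupp (S \ e.support).val := by
        ext a
        rw [indicator_apply]
        have h1 := happ a
        have h2 := hdapp a
        have h3 := he1 a
        split_ifs with hsd
        · rw [Finset.mem_sdiff] at hsd
          have h4 : e a = 0 := Finsupp.notMem_support_iff.1 hsd.2
          rw [if_pos hsd.1] at h2
          omega
        · rw [Finset.mem_sdiff] at hsd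
          push_neg at hsd
          by_cases hms : a ∈ S
          · have h4 := Finsupp.mem_support_iff.1 (hsd hms)
            rw [if_pos hms] at h2
            omega
          · rw [if_neg hms] at h2
            omega
      rw [Prod.ext_iff]
      exact ⟨indicator_recover he1, hf.symm⟩
    · intro T hT
      simp only
      rw [indicator_support]
    · rintro ⟨e, f⟩ hp
      rfl
  rw [hbij] at hcoeff
  -- evaluate the powerset sum
  have hcard : ∀ T ∈ S.powerset, (S \ T).card = S.card - T.card := by
    intro T hT
    exact Finset.card_sdiff_of_subset (Finset.mem_powerset.1 hT)
  have hps : ∑ T ∈ S.powerset,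
      ((if T.card = lenZ u then (numRed u : ℚ) else 0) *
        (if (S \ T).card = lenZ v then (numRed v : ℚ) else 0)) =
      (if S.card = lenZ u + lenZ v
        then (((lenZ u + lenZ v).choose (lenZ u) : ℚ) * numRed u * numRed v) else 0) := by
    split_ifs with hln
    · have hcg : ∀ T ∈ S.powerset,
          ((if T.card = lenZ u then (numRed u : ℚ) else 0) *
            (if (S \ T).card = lenZ v then (numRed v : ℚ) else 0)) =
          (if T.card = lenZ u then ((numRed u : ℚ) * numRed v) else 0) := by
        intro T hT
        have hc1 := hcard T hT
        have hc2 : T.card ≤ S.card := Finset.card_le_card (Finset.mem_powerset.1 hT)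
        by_cases h : T.card = lenZ u
        · rw [if_pos h, if_pos h, if_pos (by omega)]
        · rw [if_neg h, if_neg h, zero_mul]
      rw [Finset.sum_congr rfl hcg, ← Finset.sum_filter, ← Finset.powersetCard_eq_filter,
        Finset.sum_const, Finset.card_powersetCard, hln, nsmul_eq_mul]
      ring
    · rw [Finset.sum_eq_zero]
      intro T hT
      have hc1 := hcard T hT
      have hc2 : T.card ≤ S.card := Finset.card_le_card (Finset.mem_powerset.1 hT)
      by_cases h : T.card = lenZ u
      · rw [if_pos h, if_neg (by omega), mul_zero]
      · rw [if_neg h, zero_mul]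
  rw [hps] at hcoeff
  exact hcoeff

/-- **Reduced-word identity for Schubert structure constants.** If `c` gives the
expansion of the product of the back stable Schubert polynomials of `u` and `v` in
back stable Schubert polynomials, then
`C(ℓ(u)+ℓ(v), ℓ(v))·|R(u)|·|R(v)| = Σ_w c^w_{u,v}·|R(w)|`. -/
theorem reduced_word_structure_constant_identity
    (u v : Equiv.Perm ℤ)
    (hu : {i : ℤ | u i ≠ i}.Finite) (hv : {i : ℤ | v i ≠ i}.Finite)
    (c : Equiv.Perm ℤ →₀ ℕ)
    (hcsupp : ∀ w ∈ c.support, {i : ℤ | w i ≠ i}.Finite)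
    (hc : backStableSchubert u * backStableSchubert v =
      c.sum fun w a => (a : ℚ) • backStableSchubert w) :
    (Nat.choose (lenZ u + lenZ v) (lenZ v)) * numRed u * numRed v =
      c.sum fun w a => a * numRed w := by
  classical
  have hbig : ({i : ℤ | u i ≠ i} ∪ ({i : ℤ | v i ≠ i} ∪
      ⋃ w ∈ (c.support : Set (Equiv.Perm ℤ)), {i : ℤ | w i ≠ i})).Finite :=
    hu.union (hv.union (Set.Finite.biUnion c.support.finite_toSet hcsupp))
  obtain ⟨B, hB⟩ := hbig.bddBelow
  have hufix : ∀ x, x < B → u x = x := by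
    intro x hx
    by_contra h
    have := hB (Set.mem_union_left _ h)
    omega
  have hvfix : ∀ x, x < B → v x = x := by
    intro x hx
    by_contra h
    have := hB (Set.mem_union_right _ (Set.mem_union_left _ h))
    omega
  have hcfix : ∀ w ∈ c.support, ∀ x, x < B → w x = x := by
    intro w hw x hx
    by_contra h
    have := hB (Set.mem_union_right _ (Set.mem_union_right _
      (Set.mem_biUnion (by exact_mod_cast hw) h)))
    omega
  have hSn : ∀ n : ℕ, ∃ S : Finset ℤ, S.card = n ∧ ∀ x ∈ S, x < B := by
    intro n
    refine ⟨Finset.image (fun k : ℕ => B - n + k) (Finset.range n), ?_, ?_⟩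
    · rw [Finset.card_image_of_injective _ (fun a b h => by omega), Finset.card_range]
    · intro x hx
      simp only [Finset.mem_image, Finset.mem_range] at hx
      obtain ⟨k, hk, rfl⟩ := hx
      omega
  -- terms of the wrong degree vanish
  have hzero : ∀ w₀ ∈ c.support, lenZ w₀ ≠ lenZ u + lenZ v →
      (c w₀ : ℚ) * (numRed w₀ : ℚ) = 0 := by
    intro w₀ hw₀ hne
    obtain ⟨S, hScard, hSB⟩ := hSn (lenZ w₀)
    have h1 := step1 u v c B hufix hvfix hcfix hc S hSB
    rw [hScard, if_neg hne] at h1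
    have h2 := (Finset.sum_eq_zero_iff_of_nonneg (fun w _ => by positivity)).1 h1.symm w₀ hw₀
    rwa [if_pos rfl] at h2
  -- main degree
  obtain ⟨S, hScard, hSB⟩ := hSn (lenZ u + lenZ v)
  have h1 := step1 u v c B hufix hvfix hcfix hc S hSB
  rw [hScard, if_pos rfl] at h1
  have h2 : ∀ w ∈ c.support,
      (c w : ℚ) * (if lenZ u + lenZ v = lenZ w then (numRed w : ℚ) else 0) =
      (c w : ℚ) * (numRed w : ℚ) := by
    intro w hw
    by_cases h : lenZ u + lenZ v = lenZ w
    · rw [if_pos h]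
    · rw [if_neg h, mul_zero, (hzero w hw (fun hh => h hh.symm)).symm]
  rw [Finset.sum_congr rfl h2] at h1
  have hch : (lenZ u + lenZ v).choose (lenZ u) = (lenZ u + lenZ v).choose (lenZ v) := by
    have h3 := Nat.choose_symm (Nat.le_add_left (lenZ v) (lenZ u))
    rwa [Nat.add_sub_cancel] at h3
  rw [hch] at h1
  have hQ : (((lenZ u + lenZ v).choose (lenZ v) * numRed u * numRed v : ℕ) : ℚ) =
      ((∑ w ∈ c.support, c w * numRed w : ℕ) : ℚ) := by
    push_cast
    rw [h1]
  rw [Finsupp.sum]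
  exact_mod_cast hQ
end

section
/- There is at most one bilinear multiplication f on the Q-vector space spanned by Young diagrams satisfying: f is graded (f maps V_n × V_m into V_{n+m} where V_n is spanned by diagrams of n boxes), f(a,b) = ab for rationals a, b (multiples of the empty diagram), and both ξ and ∇ satisfy the Leibniz rule with respect to f. -/
open Finset YoungDiagram

private lemma geom_aux (n k : ℕ) : n * ∑ t ∈ range k, (n+1)^t + 1 = (n+1)^k := by
  induction k with
  | zero => simp
  | succ k ih =>
    rw [sum_range_succ, Nat.mul_add, pow_succ]
    nlinarith [ih]

private lemma weight_lt {n i : ℕ} {a b : ℕ → ℕ} (ha : ∀ j, a j ≤ n) (hi : i < n)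
    (hagree : ∀ j < i, a j = b j) (hlt : a i < b i) :
    ∑ j ∈ range n, a j * (n+1)^(n-1-j) < ∑ j ∈ range n, b j * (n+1)^(n-1-j) := by
  have hsplit : ∀ c : ℕ → ℕ, ∑ j ∈ range n, c j * (n+1)^(n-1-j)
      = ∑ j ∈ range (i+1), c j * (n+1)^(n-1-j) + ∑ j ∈ Ico (i+1) n, c j * (n+1)^(n-1-j) :=
    fun c => (Finset.sum_range_add_sum_Ico _ hi).symm
  have hrw : ∑ t ∈ range (n-(i+1)), (n+1)^(n-1-(i+1+t)) = ∑ t ∈ range (n-1-i), (n+1)^t := by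
    have hr : n - (i+1) = n-1-i := by omega
    rw [hr, ← Finset.sum_range_reflect (fun t => (n+1)^t) (n-1-i)]
    exact Finset.sum_congr rfl (fun t ht => by
      have := mem_range.mp ht; congr 1; omega)
  have htail : ∑ j ∈ Ico (i+1) n, a j * (n+1)^(n-1-j) < (n+1)^(n-1-i) := by
    calc ∑ j ∈ Ico (i+1) n, a j * (n+1)^(n-1-j)
        ≤ ∑ j ∈ Ico (i+1) n, n * (n+1)^(n-1-j) :=
          Finset.sum_le_sum (fun j _ => Nat.mul_le_mul_right _ (ha j))
      _ = n * ∑ j ∈ Ico (i+1) n, (n+1)^(n-1-j) := by rw [Finset.mul_sum]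
      _ = n * ∑ t ∈ range (n-1-i), (n+1)^t := by
          rw [Finset.sum_Ico_eq_sum_range, hrw]
      _ < (n+1)^(n-1-i) := by
          have := geom_aux n (n-1-i); omega
  have hhead : ∑ j ∈ range i, a j * (n+1)^(n-1-j) = ∑ j ∈ range i, b j * (n+1)^(n-1-j) :=
    Finset.sum_congr rfl (fun j hj => by rw [hagree j (mem_range.mp hj)])
  have hbtail : ∑ j ∈ range i, b j * (n+1)^(n-1-j) + b i * (n+1)^(n-1-i)
      ≤ ∑ j ∈ range n, b j * (n+1)^(n-1-j) := by
    rw [hsplit b, sum_range_succ]; exact Nat.le_add_right _ _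
  have hmid : a i * (n+1)^(n-1-i) + (n+1)^(n-1-i) ≤ b i * (n+1)^(n-1-i) := by
    calc a i * (n+1)^(n-1-i) + (n+1)^(n-1-i) = (a i + 1) * (n+1)^(n-1-i) := by ring
      _ ≤ b i * (n+1)^(n-1-i) := Nat.mul_le_mul_right _ (by omega)
  rw [hsplit a, sum_range_succ]
  omega

private lemma rowLen_le {nu : YoungDiagram} {i m : ℕ} (h : (i, m) ∉ nu) :
    nu.rowLen i ≤ m := by
  by_contra hc
  exact h (mem_iff_lt_rowLen.mpr (by omega))

private lemma rowLen_le_card (nu : YoungDiagram) (i : ℕ) : nu.rowLen i ≤ nu.cells.card := by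
  rw [rowLen_eq_card]
  exact Finset.card_le_card (Finset.filter_subset _ _)

private lemma colLen_le_card (nu : YoungDiagram) (j : ℕ) : nu.colLen j ≤ nu.cells.card := by
  rw [colLen_eq_card]
  exact Finset.card_le_card (Finset.filter_subset _ _)

/-- Structure of a cover: the added cell is at the end of some row. -/
private lemma cover_structure {mu nu : YoungDiagram} (h : Covers mu nu) :
    ∃ i : ℕ, nu.cells = insert (i, mu.rowLen i) mu.cells ∧ (i, mu.rowLen i) ∉ mu ∧
      remContent mu nu = (mu.rowLen i : ℤ) - (i : ℤ) ∧
      (∀ i', i' ≠ i → nu.rowLen i' = mu.rowLen i') ∧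
      nu.rowLen i = mu.rowLen i + 1 := by
  obtain ⟨hsub, hcard⟩ := h
  have hd : (nu.cells \ mu.cells).card = 1 := by
    rw [Finset.card_sdiff_of_subset hsub]; omega
  obtain ⟨c, hc⟩ := Finset.card_eq_one.mp hd
  obtain ⟨i, j⟩ := c
  have hmemd : (i, j) ∈ nu.cells \ mu.cells := hc ▸ Finset.mem_singleton_self _
  have hnuij : (i, j) ∈ nu := (Finset.mem_sdiff.mp hmemd).1
  have hmuij : (i, j) ∉ mu := fun hm => (Finset.mem_sdiff.mp hmemd).2 hm
  -- membership in nu splits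
  have hsplitmem : ∀ p : ℕ × ℕ, p ∈ nu.cells → p = (i, j) ∨ p ∈ mu.cells := by
    intro p hp
    by_cases hpm : p ∈ mu.cells
    · exact Or.inr hpm
    · left
      have : p ∈ nu.cells \ mu.cells := Finset.mem_sdiff.mpr ⟨hp, hpm⟩
      rw [hc] at this
      exact Finset.mem_singleton.mp this
  have hcells : nu.cells = insert (i, j) mu.cells := by
    apply Finset.Subset.antisymm
    · intro p hp
      rcases hsplitmem p hp with h1 | h1
      · exact h1 ▸ Finset.mem_insert_self _ _
      · exact Finset.mem_insert_of_mem h1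
    · intro p hp
      rcases Finset.mem_insert.mp hp with h1 | h1
      · exact h1 ▸ hnuij
      · exact hsub h1
  -- j = mu.rowLen i
  have hj : j = mu.rowLen i := by
    rcases lt_trichotomy j (mu.rowLen i) with hlt | heq | hgt
    · exact absurd (mem_iff_lt_rowLen.mpr hlt) hmuij
    · exact heq
    · exfalso
      have hmem : (i, mu.rowLen i) ∈ nu := nu.up_left_mem le_rfl (le_of_lt hgt) hnuij
      rcases hsplitmem _ hmem with h1 | h1
      · have : mu.rowLen i = j := congrArg Prod.snd h1
        omega
      · exact absurd (mu.mem_cells _ |>.mp h1) (by simp [mem_iff_lt_rowLen])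
  subst hj
  refine ⟨i, hcells, hmuij, ?_, ?_, ?_⟩
  · rw [remContent, hc, Finset.sum_singleton]
  · intro i' hne
    have hagree : ∀ j', (i', j') ∈ nu ↔ (i', j') ∈ mu := by
      intro j'
      constructor
      · intro hm
        rcases hsplitmem _ hm with h1 | h1
        · exact absurd (congrArg Prod.fst h1) hne
        · exact h1
      · intro hm; exact hsub hm
    apply le_antisymm
    · apply rowLen_le
      intro hm
      exact absurd ((hagree _).mp hm) (by simp [mem_iff_lt_rowLen])
    · by_contra hcon
      push_neg at hcon
      exact absurd ((hagree _).mpr (mem_iff_lt_rowLen.mpr hcon))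
        (by simp [mem_iff_lt_rowLen])
  · apply le_antisymm
    · apply rowLen_le
      intro hm
      rcases hsplitmem _ hm with h1 | h1
      · have : mu.rowLen i + 1 = mu.rowLen i := congrArg Prod.snd h1
        omega
      · have := mem_iff_lt_rowLen.mp (mu.mem_cells _ |>.mp h1)
        omega
    · exact mem_iff_lt_rowLen.mp hnuij

noncomputable def wt (n : ℕ) (d : YoungDiagram) : ℕ :=
  ∑ j ∈ range n, d.rowLen j * (n+1)^(n-1-j)

private lemma corner {lam : YoungDiagram} (hn : lam.cells.card ≠ 0) :
    ∃ mu : YoungDiagram, Covers mu lam ∧ ∃ c0 : ℤ, c0 ≠ remContent mu lam ∧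
      ∀ nu, Covers mu nu → nu ≠ lam →
        remContent mu nu = c0 ∨ wt lam.cells.card lam < wt lam.cells.card nu := by
  set n := lam.cells.card with hncard
  -- the number of rows and the length of the last row
  set r := lam.colLen 0 with hrdef
  have hne : lam.cells.Nonempty := Finset.card_ne_zero.mp hn
  obtain ⟨⟨x, y⟩, hxy⟩ := hne
  have h00 : (0, 0) ∈ lam := lam.up_left_mem (Nat.zero_le _) (Nat.zero_le _) hxy
  have hr : 0 < r := mem_iff_lt_colLen.mp h00
  set k := lam.rowLen (r-1) with hkdef
  have hr10 : (r-1, 0) ∈ lam := mem_iff_lt_colLen.mpr (by omega)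
  have hk : 0 < k := mem_iff_lt_rowLen.mp hr10
  have hb : (r-1, k-1) ∈ lam := mem_iff_lt_rowLen.mpr (by omega)
  have hrowr : lam.rowLen r = 0 := by
    have : (r, 0) ∉ lam := fun hm => by
      have := mem_iff_lt_colLen.mp hm; omega
    have := rowLen_le this; omega
  -- the diagram mu
  have hlower : IsLowerSet (↑(lam.cells.erase (r-1, k-1)) : Set (ℕ × ℕ)) := by
    intro p q hle hp
    simp only [Finset.coe_erase, Set.mem_diff, Finset.mem_coe, Set.mem_singleton_iff] at hp ⊢
    obtain ⟨hpl, hpb⟩ := hp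
    refine ⟨lam.isLowerSet hle hpl, ?_⟩
    rintro rfl
    obtain ⟨p1, p2⟩ := p
    obtain ⟨h1, h2⟩ := hle
    simp only at h1 h2
    have hp1 : p1 < lam.colLen p2 := mem_iff_lt_colLen.mp hpl
    have hcol : lam.colLen p2 ≤ r := lam.colLen_anti 0 p2 (Nat.zero_le _)
    have hp1eq : p1 = r - 1 := by omega
    subst hp1eq
    have hp2 : p2 < k := mem_iff_lt_rowLen.mp hpl
    have : p2 = k - 1 := by omega
    subst this
    exact hpb rfl
  set mu : YoungDiagram := ⟨lam.cells.erase (r-1, k-1), hlower⟩ with hmudef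
  have hmucells : mu.cells = lam.cells.erase (r-1, k-1) := rfl
  have hmumem : ∀ p : ℕ × ℕ, p ∈ mu ↔ (p ∈ lam ∧ p ≠ (r-1, k-1)) := by
    intro p
    rw [← mem_cells, hmucells, Finset.mem_erase, mem_cells]
    tauto
  have hmucard : mu.cells.card + 1 = lam.cells.card := by
    rw [hmucells, Finset.card_erase_of_mem hb]
    omega
  have hcov : Covers mu lam := ⟨by rw [hmucells]; exact Finset.erase_subset _ _, by omega⟩
  -- row lengths of mu
  have hmurow_ne : ∀ i, i ≠ r - 1 → mu.rowLen i = lam.rowLen i := by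
    intro i hi
    apply le_antisymm
    · apply rowLen_le
      intro hm
      have := mem_iff_lt_rowLen.mp ((hmumem _).mp hm).1
      omega
    · by_contra hcon
      push_neg at hcon
      have hmem : (i, mu.rowLen i) ∈ mu := (hmumem _).mpr
        ⟨mem_iff_lt_rowLen.mpr hcon, by simp [hi]⟩
      have := mem_iff_lt_rowLen.mp hmem
      omega
  have hmurow_last : mu.rowLen (r-1) = k - 1 := by
    apply le_antisymm
    · apply rowLen_le
      intro hm
      exact ((hmumem _).mp hm).2 rfl
    · rcases Nat.eq_or_lt_of_le hk with h1 | h1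
      · omega
      · -- k ≥ 2
        have hmem : (r-1, k-2) ∈ mu := (hmumem _).mpr
          ⟨mem_iff_lt_rowLen.mpr (by omega), by
            intro hcon
            have : k - 2 = k - 1 := congrArg Prod.snd hcon
            omega⟩
        have := mem_iff_lt_rowLen.mp hmem
        omega
  -- remContent mu lam
  have hsd : lam.cells \ mu.cells = {(r-1, k-1)} := by
    rw [hmucells]
    ext p
    simp only [Finset.mem_sdiff, Finset.mem_erase, Finset.mem_singleton]
    constructor
    · rintro ⟨h1, h2⟩
      by_contra hcon
      exact h2 ⟨hcon, h1⟩
    · rintro rfl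
      exact ⟨hb, fun h => h.1 rfl⟩
  have hrclam : remContent mu lam = ((k : ℤ) - 1) - ((r : ℤ) - 1) := by
    rw [remContent, hsd, Finset.sum_singleton]
    push_cast [Nat.cast_sub hk, Nat.cast_sub hr]
    ring
  refine ⟨mu, hcov, -(r : ℤ), ?_, ?_⟩
  · rw [hrclam]
    intro hcon
    have hk' : (0 : ℤ) < (k : ℤ) := by exact_mod_cast hk
    linarith
  · intro nu hnu hnulam
    obtain ⟨i, hcells, hnotmem, hrc, hrowne, hrowi⟩ := cover_structure hnu
    rcases lt_trichotomy i (r-1) with hi | hi | hi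
    · -- i < r - 1 : nu is lex-bigger than lam
      right
      have hcardnu : nu.cells.card = n := by
        obtain ⟨_, h2⟩ := hnu
        omega
      unfold wt
      refine weight_lt (i := i) (fun j => rowLen_le_card lam j) ?_ ?_ ?_
      · have : r ≤ n := by
          have := colLen_le_card lam 0
          omega
        omega
      · intro j hj
        rw [hrowne j (by omega), hmurow_ne j (by omega)]
      · rw [← hmurow_ne i (by omega)]
        omega
    · -- i = r - 1 : nu = lam
      exfalso
      apply hnulam
      apply YoungDiagram.ext
      rw [hcells, hi, hmurow_last, hmucells]
      exact Finset.insert_erase hb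
    · -- i > r - 1, i.e. i ≥ r
      rcases Nat.eq_or_lt_of_le (by omega : r ≤ i) with hir | hir
      · -- i = r
        left
        rw [hrc, ← hir, hmurow_ne r (by omega), hrowr]
        simp
      · -- i > r : impossible
        exfalso
        have hmem : (i, mu.rowLen i) ∈ nu := by
          rw [← mem_cells, hcells]
          exact Finset.mem_insert_self _ _
        have hr0 : (r, 0) ∈ nu := nu.up_left_mem (by omega) (Nat.zero_le _) hmem
        have : (r, 0) ∈ mu.cells := by
          have := (mem_cells _).mpr hr0
          rw [hcells] at this
          rcases Finset.mem_insert.mp this with h1 | h1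
          · exfalso
            have : r = i := congrArg Prod.fst h1
            omega
          · exact h1
        have : (r, 0) ∈ lam := (hmumem _).mp ((mem_cells _).mp this) |>.1
        have := mem_iff_lt_colLen.mp this
        omega

private lemma kernel {n : ℕ} (hn : 0 < n) (v : YoungDiagram →₀ ℚ)
    (hdeg : ∀ nu ∈ v.support, nu.cells.card = n)
    (h1 : ∀ mu, ∑ nu ∈ v.support, (if Covers mu nu then (1:ℚ) * v nu else 0) = 0)
    (h2 : ∀ mu, ∑ nu ∈ v.support,
      (if Covers mu nu then (remContent mu nu : ℚ) * v nu else 0) = 0) :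
    v = 0 := by
  by_contra hv
  have hsupp : v.support.Nonempty := Finsupp.support_nonempty_iff.mpr hv
  obtain ⟨lam, hlam, hmax⟩ := Finset.exists_max_image v.support (wt n) hsupp
  have hcard : lam.cells.card = n := hdeg lam hlam
  obtain ⟨mu, hcov, c0, hc0ne, hclass⟩ := corner (lam := lam) (by omega)
  set S := v.support.filter (fun nu => Covers mu nu) with hS
  have e1 : ∑ nu ∈ S, v nu = 0 := by
    rw [hS, Finset.sum_filter]
    have := h1 mu
    simpa using this
  have e2 : ∑ nu ∈ S, (remContent mu nu : ℚ) * v nu = 0 := by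
    rw [hS, Finset.sum_filter]; exact h2 mu
  have hlamS : lam ∈ S := Finset.mem_filter.mpr ⟨hlam, hcov⟩
  have hother : ∀ nu ∈ S.erase lam, remContent mu nu = c0 := by
    intro nu hnu
    obtain ⟨hne, hnuS⟩ := Finset.mem_erase.mp hnu
    obtain ⟨hnusupp, hnucov⟩ := Finset.mem_filter.mp hnuS
    rcases hclass nu hnucov hne with h | h
    · exact h
    · exfalso
      rw [hcard] at h
      exact absurd (hmax nu hnusupp) (by omega)
  rw [← Finset.sum_erase_add _ _ hlamS] at e1 e2
  have e2' : ∑ nu ∈ S.erase lam, (remContent mu nu : ℚ) * v nu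
      = (c0 : ℚ) * ∑ nu ∈ S.erase lam, v nu := by
    rw [Finset.mul_sum]
    exact Finset.sum_congr rfl (fun nu hnu => by rw [hother nu hnu])
  rw [e2'] at e2
  have ht : ∑ nu ∈ S.erase lam, v nu = - v lam := by linarith
  rw [ht] at e2
  have hne' : ((remContent mu lam : ℚ)) - (c0 : ℚ) ≠ 0 := by
    intro hcon
    have : (remContent mu lam : ℚ) = (c0 : ℚ) := by linarith
    exact hc0ne (by exact_mod_cast this.symm)
  have hvlam : v lam = 0 := by
    have hz : ((remContent mu lam : ℚ) - c0) * v lam = 0 := by linarith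
    rcases mul_eq_zero.mp hz with h | h
    · exact absurd h hne'
    · exact h
  exact (Finsupp.mem_support_iff.mp hlam) hvlam

private lemma op_apply (xi : (YoungDiagram →₀ ℚ) →ₗ[ℚ] (YoungDiagram →₀ ℚ))
    (C : YoungDiagram → YoungDiagram → ℚ)
    (hxi : ∀ lam mu, xi (Finsupp.single lam 1) mu = if Covers mu lam then C mu lam else 0)
    (v : YoungDiagram →₀ ℚ) (mu : YoungDiagram) :
    xi v mu = ∑ nu ∈ v.support, (if Covers mu nu then C mu nu * v nu else 0) := by
  conv_lhs => rw [← Finsupp.sum_single v]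
  rw [Finsupp.sum, map_sum, Finsupp.finset_sum_apply]
  apply Finset.sum_congr rfl
  intro nu _
  rw [← Finsupp.smul_single_one nu (v nu), map_smul, Finsupp.smul_apply, hxi]
  by_cases h : Covers mu nu <;> simp [h, mul_comm]

private lemma expand_left
    (F : (YoungDiagram →₀ ℚ) →ₗ[ℚ] (YoungDiagram →₀ ℚ) →ₗ[ℚ] (YoungDiagram →₀ ℚ))
    (w y : YoungDiagram →₀ ℚ) :
    F w y = ∑ a ∈ w.support, w a • F (Finsupp.single a 1) y := by
  conv_lhs => rw [← Finsupp.sum_single w]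
  rw [Finsupp.sum, map_sum, LinearMap.sum_apply]
  apply Finset.sum_congr rfl
  intro a _
  rw [← Finsupp.smul_single_one a (w a), map_smul, LinearMap.smul_apply]

private lemma expand_right
    (F : (YoungDiagram →₀ ℚ) →ₗ[ℚ] (YoungDiagram →₀ ℚ) →ₗ[ℚ] (YoungDiagram →₀ ℚ))
    (x w : YoungDiagram →₀ ℚ) :
    F x w = ∑ a ∈ w.support, w a • F x (Finsupp.single a 1) := by
  conv_lhs => rw [← Finsupp.sum_single w]
  rw [Finsupp.sum, map_sum]
  apply Finset.sum_congr rfl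
  intro a _
  rw [← Finsupp.smul_single_one a (w a), map_smul]

/-- There is at most one graded bilinear multiplication on the rational span of Young
diagrams for which the empty diagram behaves as the unit (rationals multiply as
rationals) and both `ξ` and `∇` satisfy the Leibniz rule. -/
theorem multiplication_unique
    (xi nabla : (YoungDiagram →₀ ℚ) →ₗ[ℚ] (YoungDiagram →₀ ℚ))
    (hxi : ∀ lam mu : YoungDiagram,
      xi (Finsupp.single lam 1) mu = if Covers mu lam then 1 else 0)
    (hnabla : ∀ lam mu : YoungDiagram,
      nabla (Finsupp.single lam 1) mu =
        if Covers mu lam then (remContent mu lam : ℚ) else 0)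
    (f g : (YoungDiagram →₀ ℚ) →ₗ[ℚ] (YoungDiagram →₀ ℚ) →ₗ[ℚ] (YoungDiagram →₀ ℚ))
    (hfgrade : ∀ lam mu nu : YoungDiagram,
      f (Finsupp.single lam 1) (Finsupp.single mu 1) nu ≠ 0 →
        nu.cells.card = lam.cells.card + mu.cells.card)
    (hggrade : ∀ lam mu nu : YoungDiagram,
      g (Finsupp.single lam 1) (Finsupp.single mu 1) nu ≠ 0 →
        nu.cells.card = lam.cells.card + mu.cells.card)
    (hfunit : ∀ a b : ℚ,
      f (Finsupp.single (⊥ : YoungDiagram) a) (Finsupp.single (⊥ : YoungDiagram) b) =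
        Finsupp.single (⊥ : YoungDiagram) (a * b))
    (hgunit : ∀ a b : ℚ,
      g (Finsupp.single (⊥ : YoungDiagram) a) (Finsupp.single (⊥ : YoungDiagram) b) =
        Finsupp.single (⊥ : YoungDiagram) (a * b))
    (hfxi : ∀ x y, xi (f x y) = f (xi x) y + f x (xi y))
    (hgxi : ∀ x y, xi (g x y) = g (xi x) y + g x (xi y))
    (hfnabla : ∀ x y, nabla (f x y) = f (nabla x) y + f x (nabla y))
    (hgnabla : ∀ x y, nabla (g x y) = g (nabla x) y + g x (nabla y)) :
    f = g := by
  -- support elements of `xi v`/`nabla v` for `v = single lam 1` are covered by `lam`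
  have hopcov : ∀ (op : (YoungDiagram →₀ ℚ) →ₗ[ℚ] (YoungDiagram →₀ ℚ))
      (C : YoungDiagram → YoungDiagram → ℚ),
      (∀ lam mu, op (Finsupp.single lam 1) mu = if Covers mu lam then C mu lam else 0) →
      ∀ lam a, a ∈ (op (Finsupp.single lam 1)).support → Covers a lam := by
    intro op C hop lam a ha
    have := Finsupp.mem_support_iff.mp ha
    rw [hop] at this
    by_contra hc
    simp [hc] at this
  have key : ∀ N : ℕ, ∀ lam mu : YoungDiagram, lam.cells.card + mu.cells.card = N →
      f (Finsupp.single lam 1) (Finsupp.single mu 1)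
        = g (Finsupp.single lam 1) (Finsupp.single mu 1) := by
    intro N
    induction N using Nat.strong_induction_on with
    | _ N IH =>
      intro lam mu hN
      by_cases hN0 : N = 0
      · -- base case : both diagrams are empty
        have hlam : lam = ⊥ := by
          apply YoungDiagram.ext
          rw [cells_bot]
          exact Finset.card_eq_zero.mp (by omega)
        have hmu : mu = ⊥ := by
          apply YoungDiagram.ext
          rw [cells_bot]
          exact Finset.card_eq_zero.mp (by omega)
        subst hlam; subst hmu
        rw [hfunit 1 1, hgunit 1 1]
      · -- inductive step
        have hNpos : 0 < N := Nat.pos_of_ne_zero hN0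
        -- F and G agree after applying op to the first argument
        have hfirst : ∀ (op : (YoungDiagram →₀ ℚ) →ₗ[ℚ] (YoungDiagram →₀ ℚ)),
            (∀ a, a ∈ (op (Finsupp.single lam 1)).support → Covers a lam) →
            f (op (Finsupp.single lam 1)) (Finsupp.single mu 1)
              = g (op (Finsupp.single lam 1)) (Finsupp.single mu 1) := by
          intro op hcov
          rw [expand_left f, expand_left g]
          apply Finset.sum_congr rfl
          intro a ha
          have hc := hcov a ha
          have hlt : a.cells.card + mu.cells.card < N := by
            obtain ⟨_, h2⟩ := hc
            omega
          rw [IH _ hlt a mu rfl]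
        have hsecond : ∀ (op : (YoungDiagram →₀ ℚ) →ₗ[ℚ] (YoungDiagram →₀ ℚ)),
            (∀ a, a ∈ (op (Finsupp.single mu 1)).support → Covers a mu) →
            f (Finsupp.single lam 1) (op (Finsupp.single mu 1))
              = g (Finsupp.single lam 1) (op (Finsupp.single mu 1)) := by
          intro op hcov
          rw [expand_right f, expand_right g]
          apply Finset.sum_congr rfl
          intro a ha
          have hc := hcov a ha
          have hlt : lam.cells.card + a.cells.card < N := by
            obtain ⟨_, h2⟩ := hc
            omega
          rw [IH _ hlt lam a rfl]
        set h : YoungDiagram →₀ ℚ :=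
          f (Finsupp.single lam 1) (Finsupp.single mu 1)
            - g (Finsupp.single lam 1) (Finsupp.single mu 1) with hdef
        have hxih : xi h = 0 := by
          rw [hdef, map_sub, hfxi, hgxi,
            hfirst xi (hopcov xi _ hxi lam),
            hsecond xi (hopcov xi _ hxi mu)]
          abel
        have hnablah : nabla h = 0 := by
          rw [hdef, map_sub, hfnabla, hgnabla,
            hfirst nabla (hopcov nabla _ hnabla lam),
            hsecond nabla (hopcov nabla _ hnabla mu)]
          abel
        have hdeg : ∀ nu ∈ h.support, nu.cells.card = N := by
          intro nu hnu
          have hne := Finsupp.mem_support_iff.mp hnu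
          rw [hdef, Finsupp.sub_apply] at hne
          by_cases hfz : f (Finsupp.single lam 1) (Finsupp.single mu 1) nu = 0
          · have : g (Finsupp.single lam 1) (Finsupp.single mu 1) nu ≠ 0 := by
              intro hgz; rw [hfz, hgz] at hne; simp at hne
            rw [hggrade lam mu nu this]; omega
          · rw [hfgrade lam mu nu hfz]; omega
        have hzero : h = 0 := by
          apply kernel hNpos h hdeg
          · intro mu'
            have := op_apply xi (fun _ _ => (1:ℚ)) hxi h mu'
            rw [hxih] at this
            simpa using this.symm
          · intro mu'
            have := op_apply nabla (fun m l => (remContent m l : ℚ)) hnabla h mu'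
            rw [hnablah] at this
            simpa using this.symm
        exact sub_eq_zero.mp (hdef ▸ hzero)
  -- conclude by bilinearity
  apply Finsupp.lhom_ext
  intro lam b
  apply Finsupp.lhom_ext
  intro mu c
  rw [← Finsupp.smul_single_one lam b, ← Finsupp.smul_single_one mu c]
  simp only [map_smul, LinearMap.smul_apply]
  rw [key (lam.cells.card + mu.cells.card) lam mu rfl]
end
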